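/- arXiv:2506.08305 — 3 statements merged into one kernel-verified Lean document; each statement's English description precedes it below -/
import Mathlib

section
/- Let R = A₁(K) be the first Weyl algebra over a field K of characteristic 0, i.e., the K-algebra generated by x, y subject to the relation xy − yx = 1. For each nonzero polynomial p(y) ∈ K[y], the left ideal R(x − p(y)) is a maximal left ideal of R. -/
/-- The defining relation of the first Weyl algebra: `xy - yx = 1`, where
`x = ι true` and `y = ι false` in the free algebra on two generators. -/
def weylRel (K : Type*) [Field K] : FreeAlgebra K Bool → FreeAlgebra K Bool → Prop :=
  fun a b =>
    a = FreeAlgebra.ι K true * FreeAlgebra.ι K false -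
        FreeAlgebra.ι K false * FreeAlgebra.ι K true ∧ b = 1

/-- The first Weyl algebra `A₁(K) = K⟨x, y⟩ / (xy - yx - 1)`. -/
abbrev Weyl (K : Type*) [Field K] := RingQuot (weylRel K)

/-- The generator `x` of the Weyl algebra. -/
noncomputable def weylX (K : Type*) [Field K] : Weyl K :=
  RingQuot.mkAlgHom K (weylRel K) (FreeAlgebra.ι K true)

/-- The generator `y` of the Weyl algebra. -/
noncomputable def weylY (K : Type*) [Field K] : Weyl K :=
  RingQuot.mkAlgHom K (weylRel K) (FreeAlgebra.ι K false)

open Polynomial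

section Aux

variable (K : Type*) [Field K] (p : K[X])

/-- Action of `x` on `K[X]`: multiplication by `p` plus differentiation. -/
noncomputable def weylXAct : Module.End K K[X] :=
  Algebra.lmul K K[X] p + derivative

/-- Action of `y` on `K[X]`: multiplication by `X`. -/
noncomputable def weylYAct : Module.End K K[X] :=
  Algebra.lmul K K[X] X

lemma weylRel_act : ∀ ⦃a b : FreeAlgebra K Bool⦄, weylRel K a b →
    FreeAlgebra.lift K (fun t => cond t (weylXAct K p) (weylYAct K)) a
      = FreeAlgebra.lift K (fun t => cond t (weylXAct K p) (weylYAct K)) b := by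
  rintro a b ⟨rfl, rfl⟩
  simp only [map_sub, map_mul, map_one, FreeAlgebra.lift_ι_apply, Bool.cond_true,
    Bool.cond_false]
  refine LinearMap.ext fun f => ?_
  simp only [LinearMap.sub_apply, Module.End.mul_apply, Module.End.one_apply,
    weylXAct, weylYAct, LinearMap.add_apply, Algebra.coe_lmul_eq_mul,
    LinearMap.mul_apply', derivative_mul, derivative_X, map_add, mul_one]
  ring

/-- The action of the Weyl algebra on `K[X]`. -/
noncomputable def weylAct : Weyl K →ₐ[K] Module.End K K[X] :=
  RingQuot.liftAlgHom K
    ⟨FreeAlgebra.lift K (fun t => cond t (weylXAct K p) (weylYAct K)), weylRel_act K p⟩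

lemma weylAct_X : weylAct K p (weylX K) = weylXAct K p := by
  rw [weylX, weylAct, RingQuot.liftAlgHom_mkAlgHom_apply, FreeAlgebra.lift_ι_apply,
    Bool.cond_true]

lemma weylAct_Y : weylAct K p (weylY K) = weylYAct K := by
  rw [weylY, weylAct, RingQuot.liftAlgHom_mkAlgHom_apply, FreeAlgebra.lift_ι_apply]
  simp

lemma weylAct_aeval (q : K[X]) :
    weylAct K p (aeval (weylY K) q) = Algebra.lmul K K[X] q := by
  rw [← aeval_algHom_apply, weylAct_Y, weylYAct, aeval_algHom_apply, aeval_X_left_apply]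

lemma weyl_comm : weylX K * weylY K = weylY K * weylX K + 1 := by
  have h := RingQuot.mkAlgHom_rel K (s := weylRel K)
    (x := FreeAlgebra.ι K true * FreeAlgebra.ι K false -
        FreeAlgebra.ι K false * FreeAlgebra.ι K true) (y := 1) ⟨rfl, rfl⟩
  simp only [map_sub, map_mul, map_one] at h
  rw [sub_eq_iff_eq_add] at h
  rw [weylX, weylY, h, add_comm]

lemma weyl_comm_aeval (q : K[X]) :
    weylX K * aeval (weylY K) q
      = aeval (weylY K) q * weylX K + aeval (weylY K) (derivative q) := by
  induction q using Polynomial.induction_on with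
  | C c =>
      simp only [aeval_C, derivative_C, map_zero, add_zero]
      exact (Algebra.commutes c (weylX K)).symm
  | add f g hf hg =>
      simp only [map_add, mul_add, add_mul, hf, hg]
      abel
  | monomial n c ih =>
      have e1 : (Polynomial.C c * X ^ (n + 1) : K[X]) = (Polynomial.C c * X ^ n) * X := by ring
      have hD : Polynomial.derivative (Polynomial.C c * X ^ n * X)
          = Polynomial.derivative (Polynomial.C c * X ^ n) * X + Polynomial.C c * X ^ n := by
        rw [derivative_mul, derivative_X, mul_one]
      have e2 : aeval (weylY K) (Polynomial.C c * X ^ n * X)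
          = aeval (weylY K) (Polynomial.C c * X ^ n) * weylY K := by
        rw [map_mul, aeval_X]
      have e3 : aeval (weylY K) (Polynomial.derivative (Polynomial.C c * X ^ n) * X)
          = aeval (weylY K) (Polynomial.derivative (Polynomial.C c * X ^ n)) * weylY K := by
        rw [map_mul, aeval_X]
      rw [e1, e2, ← mul_assoc, ih, hD, map_add, e3, add_mul,
        mul_assoc _ (weylX K) (weylY K), weyl_comm]
      noncomm_ring

variable {K p}

/-- `x·ψ(q) ≡ ψ(p q + q')` modulo the left ideal generated by `x - p(y)`. -/
lemma weyl_x_mul_aeval_mem (q : K[X]) :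
    weylX K * aeval (weylY K) q - aeval (weylY K) (p * q + derivative q)
      ∈ Ideal.span {weylX K - aeval (weylY K) p} := by
  have h : weylX K * aeval (weylY K) q - aeval (weylY K) (p * q + derivative q)
      = aeval (weylY K) q * (weylX K - aeval (weylY K) p) := by
    rw [weyl_comm_aeval, map_add, map_mul, mul_sub]
    have : aeval (weylY K) p * aeval (weylY K) q = aeval (weylY K) q * aeval (weylY K) p := by
      rw [← map_mul, ← map_mul, mul_comm]
    rw [this]
    noncomm_ring
  rw [h]
  have hg : weylX K - aeval (weylY K) p ∈ Ideal.span {weylX K - aeval (weylY K) p} :=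
    Submodule.mem_span_singleton_self _
  simpa [smul_eq_mul] using
    Submodule.smul_mem (Ideal.span {weylX K - aeval (weylY K) p}) (aeval (weylY K) q) hg

/-- Every element of the Weyl algebra is a polynomial in `y` modulo the left
ideal generated by `x - p(y)`. -/
lemma weyl_exists_poly (r : Weyl K) :
    ∃ q : K[X], r - aeval (weylY K) q ∈ Ideal.span {weylX K - aeval (weylY K) p} := by
  set I := Ideal.span {weylX K - aeval (weylY K) p} with hI
  obtain ⟨s, rfl⟩ := RingQuot.mkAlgHom_surjective K (weylRel K) r
  have key : ∀ t : Weyl K, (∃ q : K[X], t - aeval (weylY K) q ∈ I) →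
      ∃ q : K[X], RingQuot.mkAlgHom K (weylRel K) s * t - aeval (weylY K) q ∈ I := by
    induction s using FreeAlgebra.induction with
    | grade0 c =>
        rintro t ⟨q, hq⟩
        refine ⟨Polynomial.C c * q, ?_⟩
        have : RingQuot.mkAlgHom K (weylRel K) (algebraMap K _ c) * t
            - aeval (weylY K) (Polynomial.C c * q)
            = algebraMap K (Weyl K) c * (t - aeval (weylY K) q) := by
          rw [map_mul, aeval_C, AlgHom.commutes, mul_sub]
        rw [this]
        simpa [smul_eq_mul] using I.smul_mem (algebraMap K (Weyl K) c) hq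
    | grade1 b =>
        rintro t ⟨q, hq⟩
        cases b with
        | true =>
            refine ⟨p * q + derivative q, ?_⟩
            have : RingQuot.mkAlgHom K (weylRel K) (FreeAlgebra.ι K true) * t
                - aeval (weylY K) (p * q + derivative q)
                = weylX K * (t - aeval (weylY K) q)
                  + (weylX K * aeval (weylY K) q
                      - aeval (weylY K) (p * q + derivative q)) := by
              rw [weylX, mul_sub]; abel
            rw [this]
            refine I.add_mem ?_ (weyl_x_mul_aeval_mem q)
            simpa [smul_eq_mul] using I.smul_mem (weylX K) hq
        | false =>
            refine ⟨X * q, ?_⟩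
            have : RingQuot.mkAlgHom K (weylRel K) (FreeAlgebra.ι K false) * t
                - aeval (weylY K) (X * q)
                = weylY K * (t - aeval (weylY K) q) := by
              rw [map_mul, aeval_X, weylY, mul_sub]
            rw [this]
            simpa [smul_eq_mul] using I.smul_mem (weylY K) hq
    | mul a b ha hb =>
        rintro t ht
        obtain ⟨q, hq⟩ := hb t ht
        have := ha _ ⟨q, hq⟩
        simpa [map_mul, mul_assoc] using this
    | add a b ha hb =>
        rintro t ht
        obtain ⟨qa, hqa⟩ := ha t ht
        obtain ⟨qb, hqb⟩ := hb t ht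
        refine ⟨qa + qb, ?_⟩
        have : (RingQuot.mkAlgHom K (weylRel K) a + RingQuot.mkAlgHom K (weylRel K) b) * t
            - aeval (weylY K) (qa + qb)
            = (RingQuot.mkAlgHom K (weylRel K) a * t - aeval (weylY K) qa)
              + (RingQuot.mkAlgHom K (weylRel K) b * t - aeval (weylY K) qb) := by
          rw [map_add]; noncomm_ring
        rw [map_add, this]
        exact I.add_mem hqa hqb
  have h1 : ∃ q : K[X], (1 : Weyl K) - aeval (weylY K) q ∈ I :=
    ⟨1, by simp⟩
  obtain ⟨q, hq⟩ := key 1 h1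
  exact ⟨q, by simpa using hq⟩

lemma weylAct_span_gen : weylAct K p (weylX K - aeval (weylY K) p) = derivative := by
  rw [map_sub, weylAct_X, weylAct_aeval, weylXAct, add_sub_cancel_left]

lemma weylAct_one_eq_zero_of_mem {r : Weyl K}
    (hr : r ∈ Ideal.span {weylX K - aeval (weylY K) p}) :
    weylAct K p r 1 = 0 := by
  obtain ⟨s, rfl⟩ := Submodule.mem_span_singleton.mp hr
  rw [smul_eq_mul, map_mul, Module.End.mul_apply, weylAct_span_gen]
  simp

lemma weyl_mem_span_iff (r : Weyl K) :
    r ∈ Ideal.span {weylX K - aeval (weylY K) p} ↔ weylAct K p r 1 = 0 := by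
  refine ⟨weylAct_one_eq_zero_of_mem, fun h => ?_⟩
  obtain ⟨q, hq⟩ := weyl_exists_poly (p := p) r
  have hval : weylAct K p (r - aeval (weylY K) q) 1 = -q := by
    rw [map_sub, LinearMap.sub_apply, h, weylAct_aeval, zero_sub,
      Algebra.coe_lmul_eq_mul, LinearMap.mul_apply', mul_one]
  have h0 : weylAct K p (r - aeval (weylY K) q) 1 = 0 :=
    weylAct_one_eq_zero_of_mem hq
  rw [h0] at hval
  have : q = 0 := by simpa using hval.symm
  rw [this] at hq
  simpa using hq

end Aux

/-- For `K` a field of characteristic zero and each nonzero polynomial `p(y)`,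
the left ideal `R(x - p(y))` of the Weyl algebra `R = A₁(K)` is a maximal left
ideal. -/
theorem weyl_left_ideal_maximal (K : Type*) [Field K] [CharZero K]
    (p : Polynomial K) (hp : p ≠ 0) :
    (Ideal.span {weylX K - Polynomial.aeval (weylY K) p}).IsMaximal := by
  set I := Ideal.span {weylX K - Polynomial.aeval (weylY K) p} with hI
  constructor
  constructor
  · -- I ≠ ⊤
    intro h
    have h1 : (1 : Weyl K) ∈ I := h ▸ Submodule.mem_top
    have := (weyl_mem_span_iff (p := p) 1).mp h1
    simp at this
  · intro J hJ
    obtain ⟨r, hrJ, hrI⟩ := SetLike.exists_of_lt hJ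
    have hIJ : I ≤ J := le_of_lt hJ
    have hq0 : weylAct K p r 1 ≠ 0 := fun h => hrI ((weyl_mem_span_iff r).mpr h)
    -- by strong induction on degree: from any nonzero polynomial realizable from J, get 1 ∈ J
    have key : ∀ n : ℕ, ∀ q : Polynomial K, q.natDegree ≤ n → q ≠ 0 →
        (∃ s ∈ J, weylAct K p s 1 = q) → (1 : Weyl K) ∈ J := by
      intro n
      induction n with
      | zero =>
          rintro q hdeg hq ⟨s, hsJ, hsq⟩
          have hq0' : q.coeff 0 ≠ 0 := by
            intro h
            apply hq
            have := Polynomial.eq_C_of_natDegree_le_zero hdeg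
            rw [this, h, map_zero]
          set s' : Weyl K := Polynomial.aeval (weylY K) (Polynomial.C (q.coeff 0)⁻¹) * s
            with hs'
          have hs'J : s' ∈ J := by
            simpa [smul_eq_mul, hs'] using
              J.smul_mem (Polynomial.aeval (weylY K) (Polynomial.C (q.coeff 0)⁻¹)) hsJ
          have hs'1 : weylAct K p s' 1 = 1 := by
            rw [hs', map_mul, Module.End.mul_apply, hsq, weylAct_aeval,
              Algebra.coe_lmul_eq_mul, LinearMap.mul_apply']
            have hqC : q = Polynomial.C (q.coeff 0) := Polynomial.eq_C_of_natDegree_le_zero hdeg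
            nth_rewrite 2 [hqC]
            rw [← Polynomial.C_mul, inv_mul_cancel₀ hq0', Polynomial.C_1]
          have : s' - 1 ∈ I := by
            rw [weyl_mem_span_iff, map_sub, LinearMap.sub_apply, hs'1]
            simp
          have h1 : (1 : Weyl K) = s' - (s' - 1) := (sub_sub_cancel s' 1).symm
          rw [h1]
          exact J.sub_mem hs'J (hIJ this)
      | succ n ih =>
          rintro q hdeg hq ⟨s, hsJ, hsq⟩
          by_cases hd : Polynomial.derivative q = 0
          · have hdeg0 : q.natDegree = 0 :=
              Polynomial.natDegree_eq_zero_of_derivative_eq_zero hd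
            exact ih q (le_of_eq hdeg0 |>.trans (Nat.zero_le n)) hq ⟨s, hsJ, hsq⟩
          · have hdegpos : q.natDegree ≠ 0 := by
              intro h0
              apply hd
              rw [Polynomial.eq_C_of_natDegree_eq_zero h0]
              simp
            set s' : Weyl K := (weylX K - Polynomial.aeval (weylY K) p) * s with hs'
            have hs'J : s' ∈ J := by
              simpa [smul_eq_mul, hs'] using
                J.smul_mem (weylX K - Polynomial.aeval (weylY K) p) hsJ
            have hs'1 : weylAct K p s' 1 = Polynomial.derivative q := by
              rw [hs', map_mul, Module.End.mul_apply, hsq, weylAct_span_gen]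
            have hdd : (Polynomial.derivative q).natDegree ≤ n := by
              have := Polynomial.natDegree_derivative_lt hdegpos
              omega
            exact ih (Polynomial.derivative q) hdd hd ⟨s', hs'J, hs'1⟩
    have h1J : (1 : Weyl K) ∈ J :=
      key (weylAct K p r 1).natDegree _ le_rfl hq0 ⟨r, hrJ, rfl⟩
    exact (Ideal.eq_top_iff_one J).mpr h1J
end

section
/- Let E be a directed graph and suppose that the set of infinite paths in E that are not tail-equivalent to any path of the form ccc⋯ (c a closed path) falls into at most countably many tail-equivalence classes. If p is such an infinite 'irrational' path, then at most finitely many vertices on p are bases of closed paths; consequently p factors as p = γq where γ is a finite path and q is an infinite path no vertex of which lies on a closed path. -/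
/-- A directed graph: vertex type `V`, edge type `E`, source and range maps. -/
structure DGraph (V E : Type*) where
  src : E → V
  rng : E → V

namespace DGraph

variable {V E : Type*}

/-- `G.Reaches u v` iff there is a directed path (possibly trivial) from `u` to `v`. -/
def Reaches (G : DGraph V E) : V → V → Prop :=
  Relation.ReflTransGen (fun a b => ∃ e, G.src e = a ∧ G.rng e = b)

/-- A vertex is regular if it emits at least one and at most finitely many edges. -/
def Regular (G : DGraph V E) (v : V) : Prop :=
  {e | G.src e = v}.Finite ∧ {e | G.src e = v}.Nonempty

/-- A set of vertices is hereditary if it is closed under ranges of paths from its elements. -/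
def Hereditary (G : DGraph V E) (H : Set V) : Prop :=
  ∀ u ∈ H, ∀ v, G.Reaches u v → v ∈ H

/-- A set of vertices is saturated if it contains every regular vertex all of whose
emitted edges have range in the set. -/
def Saturated (G : DGraph V E) (H : Set V) : Prop :=
  ∀ v, G.Regular v → (∀ e, G.src e = v → G.rng e ∈ H) → v ∈ H


/-- An infinite path: a sequence of edges `p 0, p 1, …` with `r(p i) = s(p (i+1))`. -/
def IsInfPath (G : DGraph V E) (p : ℕ → E) : Prop :=
  ∀ i : ℕ, G.rng (p i) = G.src (p (i + 1))

/-- Two infinite sequences of edges are tail-equivalent if suitable tails coincide. -/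
def TailEquiv (p q : ℕ → E) : Prop :=
  ∃ m n : ℕ, ∀ i : ℕ, p (m + i) = q (n + i)

/-- A finite path presented as a list of edges with matching ranges and sources. -/
def IsPathList (G : DGraph V E) (l : List E) : Prop :=
  l.Chain' (fun e f => G.rng e = G.src f)

/-- A closed path based at `v`: a nonempty finite path starting and ending at `v`. -/
def IsClosedAt (G : DGraph V E) (l : List E) (v : V) : Prop :=
  ∃ h : l ≠ [], G.IsPathList l ∧ G.src (l.head h) = v ∧ G.rng (l.getLast h) = v

/-- A cycle: a closed path whose source vertices are pairwise distinct. -/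
def IsCycle (G : DGraph V E) (l : List E) : Prop :=
  G.IsPathList l ∧ (l.map G.src).Nodup ∧
    ∃ h : l ≠ [], G.rng (l.getLast h) = G.src (l.head h)

/-- A vertex is the base of a closed path. -/
def BaseOfClosed (G : DGraph V E) (v : V) : Prop :=
  ∃ l : List E, G.IsClosedAt l v

/-- A bifurcating vertex emits at least two edges. -/
def Bifurcates (G : DGraph V E) (v : V) : Prop :=
  ∃ e f : E, e ≠ f ∧ G.src e = v ∧ G.src f = v

/-- A line point: no bifurcations and no closed paths in its tree. -/
def LinePoint (G : DGraph V E) (v : V) : Prop :=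
  ∀ w, G.Reaches v w → ¬ G.Bifurcates w ∧ ¬ G.BaseOfClosed w

/-- An edge lying on some closed path. -/
def EdgeOnClosed (G : DGraph V E) (e : E) : Prop :=
  ∃ (l : List E) (v : V), G.IsClosedAt l v ∧ e ∈ l

/-- An infinite path is rational iff it is eventually periodic, equivalently
tail-equivalent to `c c c ⋯` for some closed path `c`. -/
def IsRational (G : DGraph V E) (p : ℕ → E) : Prop :=
  ∃ m d : ℕ, 0 < d ∧ ∀ i : ℕ, p (m + i + d) = p (m + i)

end DGraph

namespace IrrAux

open DGraph List

variable {V E : Type*}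

/-! ### Slices of infinite words -/

/-- The slice `[p a, p (a+1), …, p (b-1)]`. -/
def sl (p : ℕ → E) (a b : ℕ) : List E := List.ofFn (fun t : Fin (b - a) => p (a + t))

@[simp] lemma sl_length (p : ℕ → E) (a b : ℕ) : (sl p a b).length = b - a := by
  simp [sl]

lemma sl_getElem (p : ℕ → E) (a b t : ℕ) (h : t < (sl p a b).length) :
    (sl p a b)[t] = p (a + t) := by
  simp only [sl_length] at h
  simp [sl, List.getElem_ofFn]

lemma sl_ne_nil (p : ℕ → E) {a b : ℕ} (h : a < b) : sl p a b ≠ [] := by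
  intro hc
  have := congrArg List.length hc
  simp at this
  omega

lemma sl_append (p : ℕ → E) {a b c : ℕ} (hab : a ≤ b) (hbc : b ≤ c) :
    sl p a b ++ sl p b c = sl p a c := by
  apply List.ext_getElem
  · simp; omega
  · intro n h1 h2
    rw [List.getElem_append]
    split
    · rename_i h'
      rw [sl_getElem, sl_getElem]
    · rename_i h'
      rw [sl_getElem, sl_getElem]
      simp only [sl_length] at h' ⊢
      congr 1
      omega

lemma sl_singleton (p : ℕ → E) (a : ℕ) : sl p a (a + 1) = [p a] := by
  apply List.ext_getElem
  · simp
  · intro n h1 h2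
    simp only [sl_length] at h1
    have : n = 0 := by omega
    subst this
    rw [sl_getElem]
    simp

lemma sl_head (p : ℕ → E) {a b : ℕ} (hab : a < b) (h : sl p a b ≠ []) :
    (sl p a b).head h = p a := by
  rw [List.head_eq_getElem, sl_getElem]
  simp

lemma sl_getLast (p : ℕ → E) {a b : ℕ} (hab : a < b) (h : sl p a b ≠ []) :
    (sl p a b).getLast h = p (b - 1) := by
  rw [List.getLast_eq_getElem, sl_getElem]
  simp only [sl_length]
  congr 1
  omega

lemma sl_chain' (G : DGraph V E) {p : ℕ → E} (hp : G.IsInfPath p) (a b : ℕ) :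
    G.IsPathList (sl p a b) := by
  rw [DGraph.IsPathList, List.Chain', List.isChain_iff_getElem]
  intro i h
  simp only [sl_length] at h
  have h1 : i < (sl p a b).length := by simp; omega
  have h2 : i + 1 < (sl p a b).length := by simp; omega
  rw [sl_getElem, sl_getElem]
  rw [← Nat.add_assoc]
  exact hp (a + i)

/-- Tail equality gives slice equality. -/
lemma sl_shift_eq {p q : ℕ → E} {s t : ℕ} (h : ∀ i, p (s + i) = q (t + i)) (R : ℕ) :
    sl p s (s + R) = sl q t (t + R) := by
  apply List.ext_getElem
  · simp
  · intro n h1 h2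
    rw [sl_getElem, sl_getElem]
    exact h n

/-! ### Powers of a list -/

def lpow (l : List E) : ℕ → List E
  | 0 => []
  | m + 1 => l ++ lpow l m

@[simp] lemma lpow_length (l : List E) (m : ℕ) : (lpow l m).length = m * l.length := by
  induction m with
  | zero => simp [lpow]
  | succ m ih => simp [lpow, ih]; ring

lemma lpow_getElem {l : List E} (hl : l ≠ []) (m t : ℕ) (h : t < (lpow l m).length) :
    (lpow l m)[t] = l[t % l.length]'(Nat.mod_lt _ (List.length_pos_iff.mpr hl)) := by
  induction m generalizing t with
  | zero => simp [lpow] at h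
  | succ m ih =>
    simp only [lpow]
    rw [List.getElem_append]
    split
    · rename_i h'
      congr 1
      exact (Nat.mod_eq_of_lt h').symm
    · rename_i h'
      have hlen : l.length ≤ t := by omega
      have h2 : t - l.length < (lpow l m).length := by
        simp only [lpow, List.length_append, lpow_length] at h ⊢
        omega
      rw [ih _ h2]
      congr 1
      conv_rhs => rw [show t = (t - l.length) + 1 * l.length by omega]
      rw [Nat.add_mul_mod_self_right]
/-! ### Infinite concatenation of nonempty blocks -/

def blen (B : ℕ → {l : List E // l ≠ []}) (k : ℕ) : ℕ := (B k).1.length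

lemma blen_pos (B : ℕ → {l : List E // l ≠ []}) (k : ℕ) : 0 < blen B k :=
  List.length_pos_iff.mpr (B k).2

def sig (B : ℕ → {l : List E // l ≠ []}) (k : ℕ) : ℕ := ∑ j ∈ Finset.range k, blen B j

@[simp] lemma sig_zero (B : ℕ → {l : List E // l ≠ []}) : sig B 0 = 0 := by simp [sig]

lemma sig_succ (B : ℕ → {l : List E // l ≠ []}) (k : ℕ) :
    sig B (k + 1) = sig B k + blen B k := Finset.sum_range_succ _ _

lemma sig_strictMono (B : ℕ → {l : List E // l ≠ []}) : StrictMono (sig B) := by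
  apply strictMono_nat_of_lt_succ
  intro n
  rw [sig_succ]
  have := blen_pos B n
  omega

lemma sig_le_self (B : ℕ → {l : List E // l ≠ []}) (k : ℕ) : k ≤ sig B k :=
  (sig_strictMono B).le_apply

lemma sig_shift (B : ℕ → {l : List E // l ≠ []}) (k : ℕ) :
    sig B (k + 1) = blen B 0 + sig (fun j => B (j + 1)) k := by
  induction k with
  | zero => simp [sig_succ, blen]
  | succ k ih =>
    rw [sig_succ, ih, sig_succ]
    simp only [blen]
    omega

def catSeq (B : ℕ → {l : List E // l ≠ []}) (n : ℕ) : E :=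
  if h : n < (B 0).1.length then (B 0).1[n]
  else catSeq (fun k => B (k + 1)) (n - (B 0).1.length)
termination_by n
decreasing_by
  have h1 : 0 < (B 0).1.length := List.length_pos_iff.mpr (B 0).2
  omega

lemma catSeq_apply (B : ℕ → {l : List E // l ≠ []}) (k j : ℕ) (hj : j < blen B k) :
    catSeq B (sig B k + j) = (B k).1[j]'hj := by
  induction k generalizing B with
  | zero =>
    rw [catSeq]
    simp only [sig_zero, Nat.zero_add]
    rw [dif_pos (show j < (B 0).1.length from hj)]
    rfl
  | succ k ih =>
    rw [catSeq]
    have h0 : ¬ (sig B (k+1) + j < (B 0).1.length) := by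
      rw [sig_shift]
      simp only [blen]
      omega
    rw [dif_neg h0]
    have : sig B (k+1) + j - (B 0).1.length = sig (fun j => B (j+1)) k + j := by
      rw [sig_shift]; simp only [blen]; omega
    rw [this]
    exact ih (fun j => B (j+1)) (by exact hj)

lemma catSeq_rep (B : ℕ → {l : List E // l ≠ []}) (n : ℕ) :
    ∃ k j, j < blen B k ∧ n = sig B k + j := by
  have hex : ∃ K, n < sig B K := ⟨n + 1, by have := sig_le_self B (n+1); omega⟩
  classical
  let K := Nat.find hex
  have hK : n < sig B K := Nat.find_spec hex
  have hK0 : K ≠ 0 := by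
    intro h
    rw [h] at hK
    simp at hK
  obtain ⟨k, hKk⟩ : ∃ k, K = k + 1 := ⟨K - 1, by omega⟩
  rw [hKk] at hK
  have hk : ¬ n < sig B k := by
    have := Nat.find_min hex (m := k) (by omega)
    exact this
  refine ⟨k, n - sig B k, ?_, by omega⟩
  rw [sig_succ] at hK
  omega

lemma catSeq_rep_unique (B : ℕ → {l : List E // l ≠ []}) {k j k' j' : ℕ}
    (hj : j < blen B k) (hj' : j' < blen B k') (h : sig B k + j = sig B k' + j') :
    k = k' ∧ j = j' := by
  rcases lt_trichotomy k k' with hlt | heq | hgt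
  · have h1 : sig B (k + 1) ≤ sig B k' := (sig_strictMono B).monotone hlt
    rw [sig_succ] at h1
    omega
  · constructor
    · exact heq
    · subst heq; omega
  · have h1 : sig B (k' + 1) ≤ sig B k := (sig_strictMono B).monotone hgt
    rw [sig_succ] at h1
    omega

lemma catSeq_isInfPath (G : DGraph V E) (B : ℕ → {l : List E // l ≠ []})
    (hpath : ∀ k, G.IsPathList (B k).1)
    (hjun : ∀ k, G.rng ((B k).1.getLast (B k).2) = G.src ((B (k + 1)).1.head (B (k + 1)).2)) :
    G.IsInfPath (catSeq B) := by
  intro n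
  obtain ⟨k, j, hj, rfl⟩ := catSeq_rep B n
  by_cases hj1 : j + 1 < blen B k
  · rw [show sig B k + j + 1 = sig B k + (j + 1) by omega]
    rw [catSeq_apply B k j hj, catSeq_apply B k (j+1) hj1]
    have := (List.isChain_iff_getElem.mp (hpath k)) j (by simp only [blen] at hj1 ⊢; omega)
    exact this
  · have hj2 : j = blen B k - 1 := by omega
    have h1 : sig B k + j + 1 = sig B (k+1) + 0 := by
      rw [sig_succ]
      have := blen_pos B k
      omega
    rw [h1, catSeq_apply B k j hj, catSeq_apply B (k+1) 0 (blen_pos B (k+1))]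
    have hlast : (B k).1.getLast (B k).2 = (B k).1[j]'hj := by
      rw [List.getLast_eq_getElem]
      congr 1
      simp only [blen] at hj2
      omega
    have hhead : (B (k+1)).1.head (B (k+1)).2 = (B (k+1)).1[0]'(blen_pos B (k+1)) := by
      rw [List.head_eq_getElem]
      rfl
    rw [← hlast, ← hhead]
    exact hjun k

/-- The slice of `catSeq` corresponding to block `k` is block `k`. -/
lemma catSeq_sl_block (B : ℕ → {l : List E // l ≠ []}) (k : ℕ) :
    sl (catSeq B) (sig B k) (sig B (k + 1)) = (B k).1 := by
  apply List.ext_getElem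
  · simp only [sl_length, sig_succ]
    simp only [blen]
    omega
  · intro n h1 h2
    rw [sl_getElem, catSeq_apply B k n (by simpa [blen] using h2)]
    rfl

/-! ### Closed path utilities -/

section Closed

variable (G : DGraph V E)

lemma pathList_rel {l : List E} (h : G.IsPathList l) {j : ℕ} (hj : j + 1 < l.length) :
    G.rng l[j] = G.src l[j + 1] := by
  have := (List.isChain_iff_getElem.mp h) j (by omega)
  simpa using this

variable {w u : V}

lemma closed_ne_nil {l : List E} (h : G.IsClosedAt l w) : l ≠ [] := h.1

lemma closed_length_pos {l : List E} (h : G.IsClosedAt l w) : 0 < l.length :=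
  List.length_pos_iff.mpr h.1

lemma closed_chain {l : List E} (h : G.IsClosedAt l w) : G.IsPathList l := h.2.1

lemma closed_getElem_zero {l : List E} (h : G.IsClosedAt l w) (h0 : 0 < l.length) :
    G.src l[0] = w := by
  obtain ⟨hne, _, h1, _⟩ := h
  rwa [List.head_eq_getElem] at h1

lemma closed_getElem_last {l : List E} (h : G.IsClosedAt l w) (h0 : l.length - 1 < l.length) :
    G.rng l[l.length - 1] = w := by
  obtain ⟨hne, _, _, h2⟩ := h
  rwa [List.getLast_eq_getElem] at h2

lemma isClosedAt_mk {l : List E} (hne : l ≠ []) (hch : G.IsPathList l)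
    (h0 : G.src (l[0]'(List.length_pos_iff.mpr hne)) = w)
    (h1 : G.rng (l[l.length - 1]'(by have := List.length_pos_iff.mpr hne; omega)) = w) :
    G.IsClosedAt l w := by
  refine ⟨hne, hch, ?_, ?_⟩
  · rwa [List.head_eq_getElem]
  · rwa [List.getLast_eq_getElem]

lemma closed_append {l l' : List E} (h1 : G.IsClosedAt l w) (h2 : G.IsClosedAt l' w) :
    G.IsClosedAt (l ++ l') w := by
  have hne : l ≠ [] := h1.1
  have hne' : l' ≠ [] := h2.1
  have hlp := List.length_pos_iff.mpr hne
  have hlp' := List.length_pos_iff.mpr hne'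
  refine ⟨by simp [hne], ?_, ?_, ?_⟩
  · rw [DGraph.IsPathList, List.Chain', List.isChain_append]
    refine ⟨h1.2.1, h2.2.1, ?_⟩
    intro x hx y hy
    rw [List.getLast?_eq_getLast hne] at hx
    rw [List.head?_eq_head hne'] at hy
    simp only [Option.mem_def, Option.some.injEq] at hx hy
    subst hx; subst hy
    rw [h1.2.2.2, h2.2.2.1]
  · rw [List.head_append]
    rw [dif_neg (by simp [hne])]
    exact h1.2.2.1
  · rw [List.getLast_append]
    rw [dif_neg (by simp [hne'])]
    exact h2.2.2.2

lemma lpow_closed {l : List E} (h : G.IsClosedAt l w) :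
    ∀ {m : ℕ}, 0 < m → G.IsClosedAt (lpow l m) w := by
  intro m
  induction m with
  | zero => omega
  | succ m ih =>
    intro _
    by_cases hm : 0 < m
    · exact closed_append G h (ih hm)
    · have : m = 0 := by omega
      subst this
      show G.IsClosedAt (l ++ lpow l 0) w
      simpa [lpow] using h

lemma mem_lpow {l : List E} {m : ℕ} {e : E} (h : e ∈ lpow l m) : e ∈ l := by
  induction m with
  | zero => simp [lpow] at h
  | succ m ih =>
    simp only [lpow, List.mem_append] at h
    rcases h with h | h
    · exact h
    · exact ih h

/-- `w`-source-free closed path at `w`. -/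
def WFC (w : V) (l : List E) : Prop :=
  G.IsClosedAt l w ∧ ∀ j, ∀ h : j < l.length, 0 < j → G.src l[j] ≠ w

lemma wfc_exists (h : G.BaseOfClosed w) : ∃ l, WFC G w l := by
  classical
  obtain ⟨c, hc⟩ := h
  by_cases hint : ∃ j, 0 < j ∧ ∃ hj : j < c.length, G.src (c.get ⟨j, hj⟩) = w
  · obtain ⟨j0, hj0spec, hmin⟩ : ∃ j0 : ℕ, (0 < j0 ∧ ∃ hj : j0 < c.length,
        G.src (c.get ⟨j0, hj⟩) = w) ∧ ∀ j < j0, ¬ (0 < j ∧ ∃ hj : j < c.length,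
        G.src (c.get ⟨j, hj⟩) = w) :=
      ⟨Nat.find hint, Nat.find_spec hint, fun j hj => Nat.find_min hint hj⟩
    obtain ⟨hj0pos, hj0lt, hj0src⟩ := hj0spec
    rw [List.get_eq_getElem] at hj0src
    have hcl := closed_length_pos G hc
    have htlen : (c.take j0).length = j0 := by
      simp only [List.length_take]
      omega
    have htne : c.take j0 ≠ [] := by
      rw [← List.length_pos_iff, htlen]
      omega
    refine ⟨c.take j0, ⟨htne, hc.2.1.take _, ?_, ?_⟩, ?_⟩
    · rw [List.head_eq_getElem, List.getElem_take]
      exact closed_getElem_zero G hc hcl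
    · rw [List.getLast_eq_getElem, List.getElem_take]
      have h1 : j0 - 1 + 1 < c.length := by omega
      have h2 := pathList_rel G hc.2.1 (j := j0 - 1) h1
      simp only [htlen]
      rw [h2]
      have h4 : j0 - 1 + 1 = j0 := by omega
      simp only [h4]
      exact hj0src
    · intro j hj hjpos
      rw [List.getElem_take]
      intro hsrc
      have hjlt : j < c.length := by
        rw [htlen] at hj
        omega
      have : ¬ (0 < j ∧ ∃ hj : j < c.length, G.src (c.get ⟨j, hj⟩) = w) :=
        hmin j (by rw [htlen] at hj; omega)
      exact this ⟨hjpos, hjlt, by rw [List.get_eq_getElem]; exact hsrc⟩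
  · refine ⟨c, hc, ?_⟩
    intro j hj hjpos
    intro hsrc
    exact absurd ⟨j, hjpos, hj, by rw [List.get_eq_getElem]; exact hsrc⟩ hint

end Closed

section Parse

variable (G : DGraph V E) {w u : V}

lemma exists_wfc_prefix {c : List E} (hc : G.IsClosedAt c u) :
    ∃ c₁ c₂, c = c₁ ++ c₂ ∧ WFC G u c₁ ∧ (c₂ = [] ∨ G.IsClosedAt c₂ u) ∧
      c₂.length < c.length := by
  classical
  have hcl := closed_length_pos G hc
  by_cases hint : ∃ j, 0 < j ∧ ∃ hj : j < c.length, G.src (c.get ⟨j, hj⟩) = u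
  · obtain ⟨j0, hj0spec, hmin⟩ : ∃ j0 : ℕ, (0 < j0 ∧ ∃ hj : j0 < c.length,
        G.src (c.get ⟨j0, hj⟩) = u) ∧ ∀ j < j0, ¬ (0 < j ∧ ∃ hj : j < c.length,
        G.src (c.get ⟨j, hj⟩) = u) :=
      ⟨Nat.find hint, Nat.find_spec hint, fun j hj => Nat.find_min hint hj⟩
    obtain ⟨hj0pos, hj0lt, hj0src⟩ := hj0spec
    rw [List.get_eq_getElem] at hj0src
    have htlen : (c.take j0).length = j0 := by
      simp only [List.length_take]
      omega
    have htne : c.take j0 ≠ [] := by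
      rw [← List.length_pos_iff, htlen]
      omega
    have hdlen : (c.drop j0).length = c.length - j0 := by simp
    have hdne : c.drop j0 ≠ [] := by
      rw [← List.length_pos_iff, hdlen]
      omega
    refine ⟨c.take j0, c.drop j0, (List.take_append_drop j0 c).symm, ⟨⟨htne, hc.2.1.take _, ?_, ?_⟩, ?_⟩, Or.inr ⟨hdne, hc.2.1.drop _, ?_, ?_⟩, ?_⟩
    · rw [List.head_eq_getElem, List.getElem_take]
      exact closed_getElem_zero G hc hcl
    · rw [List.getLast_eq_getElem, List.getElem_take]
      have h1 : j0 - 1 + 1 < c.length := by omega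
      have h2 := pathList_rel G hc.2.1 (j := j0 - 1) h1
      simp only [htlen]
      rw [h2]
      have h4 : j0 - 1 + 1 = j0 := by omega
      simp only [h4]
      exact hj0src
    · intro j hj hjpos
      rw [List.getElem_take]
      intro hsrc
      have hjlt : j < c.length := by
        rw [htlen] at hj
        omega
      have : ¬ (0 < j ∧ ∃ hj : j < c.length, G.src (c.get ⟨j, hj⟩) = u) :=
        hmin j (by rw [htlen] at hj; omega)
      exact this ⟨hjpos, hjlt, by rw [List.get_eq_getElem]; exact hsrc⟩
    · rw [List.head_drop]
      exact hj0src
    · rw [List.getLast_eq_getElem, List.getElem_drop]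
      have h5 : j0 + ((c.drop j0).length - 1) = c.length - 1 := by
        rw [hdlen]; omega
      simp only [h5]
      exact closed_getElem_last G hc (by omega)
    · rw [hdlen]; omega
  · refine ⟨c, [], by simp, ⟨hc, ?_⟩, Or.inl rfl, by simpa using hcl⟩
    intro j hj hjpos
    intro hsrc
    exact absurd ⟨j, hjpos, hj, by rw [List.get_eq_getElem]; exact hsrc⟩ hint

lemma wfc_parse (NRu : ∀ l g, WFC G u l → WFC G u g → l = g) {ℓ : List E} (hℓ : WFC G u ℓ) :
    ∀ c, G.IsClosedAt c u → ∃ m, 0 < m ∧ c = lpow ℓ m := by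
  suffices H : ∀ n, ∀ c : List E, c.length ≤ n → G.IsClosedAt c u →
      ∃ m, 0 < m ∧ c = lpow ℓ m by
    intro c hc
    exact H c.length c le_rfl hc
  intro n
  induction n with
  | zero =>
    intro c hlen hc
    have := closed_length_pos G hc
    omega
  | succ n ih =>
    intro c hlen hc
    obtain ⟨c₁, c₂, hsplit, hwfc1, hc2, hlt⟩ := exists_wfc_prefix G hc
    have hc1ℓ : c₁ = ℓ := NRu c₁ ℓ hwfc1 hℓ
    rcases hc2 with h2 | h2
    · refine ⟨1, by omega, ?_⟩
      rw [hsplit, hc1ℓ, h2]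
      show ℓ ++ [] = lpow ℓ 1
      simp [lpow]
    · obtain ⟨m, hm, hm2⟩ := ih c₂ (by omega) h2
      refine ⟨m + 1, by omega, ?_⟩
      rw [hsplit, hc1ℓ, hm2]
      rfl

lemma closed_rotate {c : List E} (hc : G.IsClosedAt c w) {t : ℕ} (ht : t < c.length)
    (hu : G.src (c.get ⟨t, ht⟩) = u) :
    ∃ c', G.IsClosedAt c' u ∧ ∀ e : E, e ∈ c' ↔ e ∈ c := by
  rw [List.get_eq_getElem] at hu
  have hcl := closed_length_pos G hc
  rcases Nat.eq_zero_or_pos t with rfl | htpos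
  · have : u = w := by
      rw [← hu]
      simpa using closed_getElem_zero G hc hcl
    subst this
    exact ⟨c, hc, fun e => Iff.rfl⟩
  · have hdne : c.drop t ≠ [] := by
      rw [← List.length_pos_iff]
      simp
      omega
    have htne : c.take t ≠ [] := by
      rw [← List.length_pos_iff]
      simp
      omega
    refine ⟨c.drop t ++ c.take t, ⟨by simp [hdne], ?_, ?_, ?_⟩, ?_⟩
    · rw [DGraph.IsPathList, List.Chain', List.isChain_append]
      refine ⟨hc.2.1.drop _, hc.2.1.take _, ?_⟩
      intro x hx y hy
      rw [List.getLast?_eq_getLast hdne] at hx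
      rw [List.head?_eq_head htne] at hy
      simp only [Option.mem_def, Option.some.injEq] at hx hy
      subst hx; subst hy
      rw [List.getLast_eq_getElem, List.getElem_drop]
      have h5 : t + ((c.drop t).length - 1) = c.length - 1 := by
        simp
        omega
      simp only [h5]
      rw [closed_getElem_last G hc (by omega)]
      rw [List.head_eq_getElem, List.getElem_take]
      exact (closed_getElem_zero G hc hcl).symm
    · rw [List.head_append, dif_neg (by simp [hdne])]
      rw [List.head_drop]
      exact hu
    · rw [List.getLast_append, dif_neg (by simp [htne])]
      rw [List.getLast_eq_getElem, List.getElem_take]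
      have h1 : t - 1 + 1 < c.length := by omega
      have h2 := pathList_rel G hc.2.1 (j := t - 1) h1
      have h3 : (c.take t).length = t := by simp; omega
      simp only [h3]
      rw [h2]
      have h4 : t - 1 + 1 = t := by omega
      simp only [h4]
      exact hu
    · intro e
      constructor
      · intro h
        rcases List.mem_append.mp h with h | h
        · exact List.mem_of_mem_drop h
        · exact List.mem_of_mem_take h
      · intro h
        conv at h => rw [← List.take_append_drop t c]
        rcases List.mem_append.mp h with h | h
        · exact List.mem_append.mpr (Or.inr h)
        · exact List.mem_append.mpr (Or.inl h)

lemma between_mono {r : ℕ → ℕ} (hr : StrictMono r) {n : ℕ} (hn : r 0 ≤ n) :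
    ∃ j, r j ≤ n ∧ n < r (j + 1) := by
  classical
  have hex : ∃ K, n < r K := ⟨n + 1, by have := hr.le_apply (x := n + 1); omega⟩
  have hK := Nat.find_spec hex
  have hK0 : Nat.find hex ≠ 0 := by
    intro h
    rw [h] at hK
    omega
  refine ⟨Nat.find hex - 1, ?_, ?_⟩
  · have := Nat.find_min hex (m := Nat.find hex - 1) (by omega)
    omega
  · have : Nat.find hex - 1 + 1 = Nat.find hex := by omega
    rw [this]
    exact hK

lemma returns_rational {p : ℕ → E} (hp : G.IsInfPath p) {r : ℕ → ℕ}
    (hr : StrictMono r) (hsrc : ∀ j, G.src (p (r j)) = u)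
    (NRu : ∀ l g, WFC G u l → WFC G u g → l = g) : G.IsRational p := by
  have hrj : ∀ j, r j < r (j + 1) := fun j => hr (by omega)
  have hslice : ∀ j, G.IsClosedAt (sl p (r j) (r (j + 1))) u := by
    intro j
    have hne := sl_ne_nil p (hrj j)
    refine isClosedAt_mk G hne (sl_chain' G hp _ _) ?_ ?_
    · rw [sl_getElem]
      simpa using hsrc j
    · rw [sl_getElem]
      simp only [sl_length]
      have h1 : r j + (r (j + 1) - r j - 1) = r (j + 1) - 1 := by
        have := hrj j; omega
      rw [h1]
      have h2 := hp (r (j + 1) - 1)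
      have h3 : r (j + 1) - 1 + 1 = r (j + 1) := by have := hrj j; omega
      rw [h3] at h2
      rw [h2]
      exact hsrc (j + 1)
  obtain ⟨ℓ, hℓ⟩ := wfc_exists G ⟨_, hslice 0⟩
  have hLpos : 0 < ℓ.length := closed_length_pos G hℓ.1
  have hℓne : ℓ ≠ [] := hℓ.1.1
  have hparse : ∀ j, ∃ m, 0 < m ∧ sl p (r j) (r (j + 1)) = lpow ℓ m :=
    fun j => wfc_parse G NRu hℓ _ (hslice j)
  have hmod : ∀ j, ∃ A, r j = r 0 + A * ℓ.length := by
    intro j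
    induction j with
    | zero => exact ⟨0, by simp⟩
    | succ j ih =>
      obtain ⟨A, hA⟩ := ih
      obtain ⟨m, hm, hmeq⟩ := hparse j
      have hlen := congrArg List.length hmeq
      simp only [sl_length, lpow_length] at hlen
      refine ⟨A + m, ?_⟩
      have := hrj j
      have h2 : r (j + 1) = r j + m * ℓ.length := by omega
      rw [h2, hA]
      ring
  have hval : ∀ n, r 0 ≤ n →
      p n = ℓ[(n - r 0) % ℓ.length]'(Nat.mod_lt _ hLpos) := by
    intro n hn
    obtain ⟨j, h1, h2⟩ := between_mono hr hn
    obtain ⟨m, hm, hmeq⟩ := hparse j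
    have hidx : n - r j < (sl p (r j) (r (j + 1))).length := by
      simp only [sl_length]; omega
    have hv1 : p n = (sl p (r j) (r (j + 1)))[n - r j]'hidx := by
      rw [sl_getElem]
      congr 1
      omega
    rw [hv1]
    have hidx2 : n - r j < (lpow ℓ m).length := by
      rw [← hmeq]; exact hidx
    have hv2 : (sl p (r j) (r (j + 1)))[n - r j]'hidx = (lpow ℓ m)[n - r j]'hidx2 := by
      congr 1
    rw [hv2, lpow_getElem hℓne]
    congr 1
    obtain ⟨A, hA⟩ := hmod j
    have hALn : A * ℓ.length ≤ n - r 0 := by omega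
    have h6 : n - r j = (n - r 0) - A * ℓ.length := by omega
    rw [h6]
    conv_rhs => rw [show n - r 0 = ((n - r 0) - A * ℓ.length) + A * ℓ.length by omega]
    rw [Nat.add_mul_mod_self_right]
  refine ⟨r 0, ℓ.length, hLpos, ?_⟩
  intro i
  rw [hval (r 0 + i + ℓ.length) (by omega), hval (r 0 + i) (by omega)]
  congr 1
  have h7 : r 0 + i + ℓ.length - r 0 = i + ℓ.length := by omega
  have h8 : r 0 + i - r 0 = i := by omega
  rw [h7, h8, Nat.add_mod_right]

end Parse

/-! ### Alignment of enumerated position sets -/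

lemma enum_align {f g : ℕ → ℕ} (hf : StrictMono f) (hg : StrictMono g) (s t : ℕ)
    (h : ∀ i : ℕ, (∃ k, f k = s + i) ↔ (∃ k, g k = t + i)) :
    ∃ a b, ∀ i : ℕ, ∃ d, f (a + i) = s + d ∧ g (b + i) = t + d := by
  classical
  have hex : ∃ k, s ≤ f k := ⟨s, hf.le_apply⟩
  obtain ⟨a, haspec, hamin⟩ : ∃ a, s ≤ f a ∧ ∀ k < a, ¬ s ≤ f k :=
    ⟨Nat.find hex, Nat.find_spec hex, fun k hk => Nat.find_min hex hk⟩
  obtain ⟨b, hb⟩ : ∃ k, g k = t + (f a - s) := (h (f a - s)).mp ⟨a, by omega⟩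
  refine ⟨a, b, ?_⟩
  intro i
  induction i with
  | zero =>
    refine ⟨f a - s, ?_, ?_⟩
    · rw [Nat.add_zero]
      omega
    · rw [Nat.add_zero, hb]
  | succ i ih =>
    rw [← Nat.add_assoc, ← Nat.add_assoc]
    obtain ⟨d, hfd, hgd⟩ := ih
    have hflt : f (a + i) < f (a + i + 1) := hf (by omega)
    have hfd1 : f (a + i + 1) = s + (f (a + i + 1) - s) := by omega
    set d1 := f (a + i + 1) - s with hd1
    have hdd1 : d < d1 := by omega
    obtain ⟨k', hk'⟩ := (h d1).mp ⟨a + i + 1, hfd1⟩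
    have hk'gt : b + i < k' := by
      apply hg.lt_iff_lt.mp
      omega
    have hgb1le : g (b + i + 1) ≤ t + d1 := by
      have h1 : b + i + 1 ≤ k' := by omega
      have := hg.monotone h1
      omega
    have hgb1gt : t + d < g (b + i + 1) := by
      have : g (b + i) < g (b + i + 1) := hg (by omega)
      omega
    have hgd2 : g (b + i + 1) = t + (g (b + i + 1) - t) := by omega
    set d2 := g (b + i + 1) - t with hd2
    obtain ⟨k'', hk''⟩ := (h d2).mpr ⟨b + i + 1, hgd2⟩
    have hk''gt : a + i < k'' := by
      apply hf.lt_iff_lt.mp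
      omega
    have hle : f (a + i + 1) ≤ f k'' := hf.monotone (by omega)
    have hd12 : d1 ≤ d2 := by omega
    exact ⟨d1, hfd1, by omega⟩

/-! ### From an uncountable separated family to a contradiction -/

lemma family_contra (G : DGraph V E)
    (hcount : ∃ F : {p : ℕ → E // G.IsInfPath p ∧ ¬ G.IsRational p} → ℕ,
      ∀ a b, F a = F b → DGraph.TailEquiv a.1 b.1)
    (Φ : (ℕ → Bool) → ℕ → E)
    (hpath : ∀ x, G.IsInfPath (Φ x)) (hirr : ∀ x, ¬ G.IsRational (Φ x))
    (hsep : ∀ x y, DGraph.TailEquiv (Φ x) (Φ y) → ∃ N, ∀ k, N ≤ k → x k = y k) :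
    False := by
  classical
  obtain ⟨F, hF⟩ := hcount
  set F' : (ℕ → Bool) → ℕ := fun x => F ⟨Φ x, hpath x, hirr x⟩ with hF'
  have key : ∀ x y, F' x = F' y → ∃ N, ∀ k, N ≤ k → x k = y k := by
    intro x y hxy
    exact hsep x y (hF _ _ hxy)
  set rep : ℕ → (ℕ → Bool) := fun n =>
    if h : ∃ x, F' x = n then h.choose else fun _ => false with hrep
  have hrepF : ∀ x, F' (rep (F' x)) = F' x := by
    intro x
    have h : ∃ y, F' y = F' x := ⟨x, rfl⟩
    simp only [hrep, dif_pos h]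
    exact h.choose_spec
  have hdiff : ∀ x, {k | x k ≠ rep (F' x) k}.Finite := by
    intro x
    obtain ⟨N, hN⟩ := key x (rep (F' x)) (hrepF x).symm
    apply Set.Finite.subset (Set.finite_Iio N)
    intro k hk
    simp only [Set.mem_setOf_eq] at hk
    by_contra hlt
    simp only [Set.mem_Iio, not_lt] at hlt
    exact hk (hN k hlt)
  set Ψ : (ℕ → Bool) → ℕ × Finset ℕ := fun x => (F' x, (hdiff x).toFinset) with hΨ
  have hinj : Function.Injective Ψ := by
    intro x y hxy
    simp only [hΨ, Prod.mk.injEq] at hxy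
    obtain ⟨h1, h2⟩ := hxy
    funext k
    have hx : x k ≠ rep (F' x) k ↔ k ∈ (hdiff x).toFinset := by simp
    have hy' : y k ≠ rep (F' y) k ↔ k ∈ (hdiff y).toFinset := by simp
    by_cases hm : k ∈ (hdiff x).toFinset
    · have hmx := hx.mpr hm
      have hmy := hy'.mpr (h2 ▸ hm)
      rw [h1] at hmx
      cases hxk : x k <;> cases hyk : y k <;> cases hrk : rep (F' y) k <;> simp_all
    · have hmx : x k = rep (F' x) k := by
        by_contra hc
        exact hm (hx.mp hc)
      have hmy : y k = rep (F' y) k := by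
        by_contra hc
        exact (h2 ▸ hm) (hy'.mp hc)
      rw [hmx, hmy, h1]
  have hcnt : Countable (ℕ → Bool) := hinj.countable
  obtain ⟨e, he⟩ := (countable_iff_exists_injective (ℕ → Bool)).mp hcnt
  have hSetInj : Function.Injective (fun (S : Set ℕ) => (fun n : ℕ => decide (n ∈ S))) := by
    intro S T hST
    ext n
    exact decide_eq_decide.mp (congrFun hST n)
  exact Function.cantor_injective (e ∘ _) (he.comp hSetInj)

/-! ### The rich case: two distinct `w`-free closed paths at one vertex -/

section Rich

def eB (x : ℕ → Bool) (k : ℕ) : ℕ := 4 * k + 2 + (x k).toNat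

lemma eB_strictMono (x y : ℕ → Bool) {k k' : ℕ} (h : k < k') : eB x k < eB y k' := by
  have h1 := Bool.toNat_lt (x k)
  have h2 := Bool.toNat_lt (y k')
  simp only [eB]
  omega

def patBlocks (x : ℕ → Bool) : ℕ → {l : List Bool // l ≠ []} :=
  fun k => ⟨List.replicate (eB x k) false ++ [true], by simp⟩

def isG (x : ℕ → Bool) : ℕ → Bool := catSeq (patBlocks x)

lemma patBlocks_blen (x : ℕ → Bool) (k : ℕ) : blen (patBlocks x) k = eB x k + 1 := by
  simp [blen, patBlocks]

def gpos (x : ℕ → Bool) (k : ℕ) : ℕ := sig (patBlocks x) k + eB x k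

lemma gpos_strictMono (x : ℕ → Bool) : StrictMono (gpos x) := by
  apply strictMono_nat_of_lt_succ
  intro k
  have h1 := sig_succ (patBlocks x) k
  rw [patBlocks_blen] at h1
  simp only [gpos]
  have := eB_strictMono x x (k := k) (k' := k + 1) (by omega)
  omega

lemma gpos_gap (x : ℕ → Bool) (k : ℕ) : gpos x (k + 1) = gpos x k + (eB x (k + 1) + 1) := by
  have h1 := sig_succ (patBlocks x) k
  rw [patBlocks_blen] at h1
  simp only [gpos]
  omega

lemma patBlocks_getElem (x : ℕ → Bool) (k j : ℕ) (hj : j < blen (patBlocks x) k) :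
    (patBlocks x k).1[j]'hj = decide (j = eB x k) := by
  rw [patBlocks_blen] at hj
  show (List.replicate (eB x k) false ++ [true])[j]'(by simp; omega) = decide (j = eB x k)
  rw [List.getElem_append]
  split
  · rename_i h'
    simp only [List.length_replicate] at h'
    rw [List.getElem_replicate]
    simp
    omega
  · rename_i h'
    simp only [List.length_replicate] at h'
    have : j = eB x k := by omega
    simp [this]

lemma isG_true_iff (x : ℕ → Bool) (n : ℕ) : isG x n = true ↔ ∃ k, gpos x k = n := by
  obtain ⟨k, j, hj, rfl⟩ := catSeq_rep (patBlocks x) n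
  rw [show isG x (sig (patBlocks x) k + j) = (patBlocks x k).1[j]'hj from
    catSeq_apply (patBlocks x) k j hj]
  rw [patBlocks_getElem]
  constructor
  · intro h
    simp only [decide_eq_true_eq] at h
    exact ⟨k, by simp [gpos, h]⟩
  · rintro ⟨k', hk'⟩
    simp only [gpos] at hk'
    have hek : eB x k' < blen (patBlocks x) k' := by
      rw [patBlocks_blen]; omega
    obtain ⟨h1, h2⟩ := catSeq_rep_unique (patBlocks x) hek hj hk'
    subst h1
    simp only [decide_eq_true_eq]
    omega

variable (G : DGraph V E)

def richLetters (lℓ lG : List E) (hℓ : lℓ ≠ []) (hG : lG ≠ []) (x : ℕ → Bool) :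
    ℕ → {l : List E // l ≠ []} :=
  fun m => if isG x m then ⟨lG, hG⟩ else ⟨lℓ, hℓ⟩

variable {w : V} {lℓ lG : List E}

lemma wfc_src_iff {l : List E} (h : WFC G w l) (j : ℕ) (hj : j < l.length) :
    G.src l[j] = w ↔ j = 0 := by
  constructor
  · intro hs
    by_contra hj0
    exact h.2 j hj (by omega) hs
  · rintro rfl
    exact closed_getElem_zero G h.1 (by omega)

section RichQ

variable (hwℓ : WFC G w lℓ) (hwG : WFC G w lG)

lemma richLetters_wfc (x : ℕ → Bool) (m : ℕ) :
    WFC G w (richLetters lℓ lG hwℓ.1.1 hwG.1.1 x m).1 := by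
  simp only [richLetters]
  split
  · exact hwG
  · exact hwℓ

lemma richQ_isInfPath (x : ℕ → Bool) :
    G.IsInfPath (catSeq (richLetters lℓ lG hwℓ.1.1 hwG.1.1 x)) := by
  apply catSeq_isInfPath
  · intro k
    exact (richLetters_wfc G hwℓ hwG x k).1.2.1
  · intro k
    rw [(richLetters_wfc G hwℓ hwG x k).1.2.2.2,
      (richLetters_wfc G hwℓ hwG x (k + 1)).1.2.2.1]

lemma richQ_src_iff (x : ℕ → Bool) (n : ℕ) :
    G.src (catSeq (richLetters lℓ lG hwℓ.1.1 hwG.1.1 x) n) = w ↔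
      ∃ k, sig (richLetters lℓ lG hwℓ.1.1 hwG.1.1 x) k = n := by
  set B := richLetters lℓ lG hwℓ.1.1 hwG.1.1 x with hB
  obtain ⟨k, j, hj, rfl⟩ := catSeq_rep B n
  rw [show catSeq B (sig B k + j) = (B k).1[j]'hj from catSeq_apply B k j hj]
  rw [wfc_src_iff G (richLetters_wfc G hwℓ hwG x k) j hj]
  constructor
  · rintro rfl
    exact ⟨k, by simp⟩
  · rintro ⟨k', hk'⟩
    have h0 : (0 : ℕ) < blen B k' := blen_pos B k'
    obtain ⟨h1, h2⟩ := catSeq_rep_unique B h0 hj (by omega)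
    omega

/-- The core alignment argument for the rich construction. -/
lemma rich_core (hne : lℓ ≠ lG) (x y : ℕ → Bool) {s t : ℕ}
    (hq : ∀ i, catSeq (richLetters lℓ lG hwℓ.1.1 hwG.1.1 x) (s + i) =
      catSeq (richLetters lℓ lG hwℓ.1.1 hwG.1.1 y) (t + i)) :
    ∃ a b a' b',
      (∀ i, ∃ d, sig (richLetters lℓ lG hwℓ.1.1 hwG.1.1 x) (a + i) = s + d ∧
        sig (richLetters lℓ lG hwℓ.1.1 hwG.1.1 y) (b + i) = t + d) ∧
      (∀ i, ∃ d, gpos x (a' + i) = a + d ∧ gpos y (b' + i) = b + d) ∧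
      (∀ i, eB x (a' + i + 1) = eB y (b' + i + 1)) := by
  set Bx := richLetters lℓ lG hwℓ.1.1 hwG.1.1 x with hBx
  set By := richLetters lℓ lG hwℓ.1.1 hwG.1.1 y with hBy
  have hW : ∀ i : ℕ, (∃ k, sig Bx k = s + i) ↔ (∃ k, sig By k = t + i) := by
    intro i
    rw [← richQ_src_iff G hwℓ hwG x (s + i), ← richQ_src_iff G hwℓ hwG y (t + i), hq i]
  obtain ⟨a, b, halign⟩ := enum_align (sig_strictMono Bx) (sig_strictMono By) s t hW
  have hlen : ∀ i, blen Bx (a + i) = blen By (b + i) := by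
    intro i
    obtain ⟨d1, hx1, hy1⟩ := halign i
    obtain ⟨d2, hx2, hy2⟩ := halign (i + 1)
    have hsx := sig_succ Bx (a + i)
    have hsy := sig_succ By (b + i)
    rw [show a + (i + 1) = a + i + 1 from rfl] at hx2
    rw [show b + (i + 1) = b + i + 1 from rfl] at hy2
    omega
  have hlet : ∀ i, (Bx (a + i)).1 = (By (b + i)).1 := by
    intro i
    obtain ⟨d1, hx1, hy1⟩ := halign i
    apply List.ext_getElem
    · have := hlen i
      simpa [blen] using this
    · intro j h1 h2
      rw [show (Bx (a + i)).1[j]'h1 = catSeq Bx (sig Bx (a + i) + j) from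
        (catSeq_apply Bx (a + i) j h1).symm]
      rw [show (By (b + i)).1[j]'h2 = catSeq By (sig By (b + i) + j) from
        (catSeq_apply By (b + i) j h2).symm]
      rw [hx1, hy1]
      rw [show s + d1 + j = s + (d1 + j) from by omega]
      rw [show t + d1 + j = t + (d1 + j) from by omega]
      exact hq (d1 + j)
  have hisG : ∀ i, isG x (a + i) = isG y (b + i) := by
    intro i
    have h := hlet i
    simp only [hBx, hBy, richLetters] at h
    cases h1 : isG x (a + i) <;> cases h2 : isG y (b + i)
    · rfl
    · rw [h1, h2] at h
      simp only [Bool.false_eq_true, if_false, if_true] at h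
      exact absurd h hne
    · rw [h1, h2] at h
      simp only [Bool.false_eq_true, if_false, if_true] at h
      exact absurd h.symm hne
    · rfl
  have hGiff : ∀ i : ℕ, (∃ k, gpos x k = a + i) ↔ (∃ k, gpos y k = b + i) := by
    intro i
    rw [← isG_true_iff, ← isG_true_iff, hisG i]
  obtain ⟨a', b', halign2⟩ := enum_align (gpos_strictMono x) (gpos_strictMono y) a b hGiff
  refine ⟨a, b, a', b', halign, halign2, ?_⟩
  intro i
  obtain ⟨d1, hx1, hy1⟩ := halign2 i
  obtain ⟨d2, hx2, hy2⟩ := halign2 (i + 1)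
  have hgx := gpos_gap x (a' + i)
  have hgy := gpos_gap y (b' + i)
  rw [show a' + (i + 1) = a' + i + 1 from rfl] at hx2
  rw [show b' + (i + 1) = b' + i + 1 from rfl] at hy2
  omega

lemma richQ_not_rational (hne : lℓ ≠ lG) (x : ℕ → Bool) :
    ¬ G.IsRational (catSeq (richLetters lℓ lG hwℓ.1.1 hwG.1.1 x)) := by
  rintro ⟨m, d, hd, hper⟩
  have hq : ∀ i, catSeq (richLetters lℓ lG hwℓ.1.1 hwG.1.1 x) (m + i) =
      catSeq (richLetters lℓ lG hwℓ.1.1 hwG.1.1 x) ((m + d) + i) := by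
    intro i
    have h := hper i
    rw [show m + i + d = m + d + i from by omega] at h
    exact h.symm
  obtain ⟨a, b, a', b', h1, h2, h3⟩ := rich_core G hwℓ hwG hne x x (s := m) (t := m + d) hq
  obtain ⟨d0, hx0, hy0⟩ := h1 0
  rw [show a + 0 = a from rfl] at hx0
  rw [show b + 0 = b from rfl] at hy0
  have hab : a < b := by
    apply (sig_strictMono (richLetters lℓ lG hwℓ.1.1 hwG.1.1 x)).lt_iff_lt.mp
    omega
  obtain ⟨d0', hx0', hy0'⟩ := h2 0
  rw [show a' + 0 = a' from rfl] at hx0'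
  rw [show b' + 0 = b' from rfl] at hy0'
  have hab' : a' < b' := by
    apply (gpos_strictMono x).lt_iff_lt.mp
    omega
  have h30 := h3 0
  have hmono := eB_strictMono x x (k := a' + 0 + 1) (k' := b' + 0 + 1) (by omega)
  omega

lemma richQ_sep (hne : lℓ ≠ lG) (x y : ℕ → Bool)
    (h : DGraph.TailEquiv (catSeq (richLetters lℓ lG hwℓ.1.1 hwG.1.1 x))
      (catSeq (richLetters lℓ lG hwℓ.1.1 hwG.1.1 y))) :
    ∃ N, ∀ k, N ≤ k → x k = y k := by
  obtain ⟨s, t, hq⟩ := h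
  obtain ⟨a, b, a', b', h1, h2, h3⟩ := rich_core G hwℓ hwG hne x y (s := s) (t := t) hq
  have hab : a' = b' := by
    have h30 := h3 0
    have hx := Bool.toNat_lt (x (a' + 0 + 1))
    have hy := Bool.toNat_lt (y (b' + 0 + 1))
    simp only [eB] at h30
    omega
  subst hab
  refine ⟨a' + 1, ?_⟩
  intro k hk
  have h3k := h3 (k - a' - 1)
  rw [show a' + (k - a' - 1) + 1 = k from by omega] at h3k
  simp only [eB] at h3k
  have hx := Bool.toNat_lt (x k)
  have hy := Bool.toNat_lt (y k)
  have htn : (x k).toNat = (y k).toNat := by omega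
  cases hxk : x k <;> cases hyk : y k <;> simp_all

end RichQ

lemma rich_contra
    (hcount : ∃ F : {p : ℕ → E // G.IsInfPath p ∧ ¬ G.IsRational p} → ℕ,
      ∀ a b, F a = F b → DGraph.TailEquiv a.1 b.1)
    (hrich : ∃ (w : V) (l g : List E), WFC G w l ∧ WFC G w g ∧ l ≠ g) : False := by
  obtain ⟨w, l, g, hwl, hwg, hne⟩ := hrich
  exact family_contra G hcount (fun x => catSeq (richLetters l g hwl.1.1 hwg.1.1 x))
    (fun x => richQ_isInfPath G hwl hwg x) (fun x => richQ_not_rational G hwl hwg hne x)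
    (fun x y h => richQ_sep G hwl hwg hne x y h)

end Rich

/-! ### The non-rich case: counting construction -/

lemma lpow_ne_nil {l : List E} (hl : l ≠ []) {m : ℕ} (hm : 0 < m) : lpow l m ≠ [] := by
  rw [← List.length_pos_iff, lpow_length]
  have := List.length_pos_iff.mpr hl
  exact Nat.mul_pos hm this

lemma lpow_head {l : List E} (hl : l ≠ []) {m : ℕ} (hm : 0 < m) (h : lpow l m ≠ []) :
    (lpow l m).head h = l.head hl := by
  obtain ⟨m, rfl⟩ : ∃ m', m = m' + 1 := ⟨m - 1, by omega⟩
  show (l ++ lpow l m).head _ = l.head hl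
  exact List.head_append_of_ne_nil hl

lemma countP_lpow (b : E → Bool) (l : List E) (m : ℕ) :
    List.countP b (lpow l m) = m * List.countP b l := by
  induction m with
  | zero => simp [lpow]
  | succ m ih =>
    show List.countP b (l ++ lpow l m) = _
    rw [List.countP_append, ih]
    ring

/-- Bool-valued source test. -/
noncomputable def bsrc (G : DGraph V E) (v : V) : E → Bool :=
  fun e => @decide (G.src e = v) (Classical.propDecidable _)

lemma bsrc_true_iff (G : DGraph V E) (v : V) (e : E) : bsrc G v e = true ↔ G.src e = v :=
  ⟨fun h => @of_decide_eq_true _ (Classical.propDecidable _) h,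
   fun h => @decide_eq_true _ (Classical.propDecidable _) h⟩

lemma countP_eq_one_of_wfc (G : DGraph V E) {w : V} {l : List E} (h : WFC G w l) :
    List.countP (bsrc G w) l = 1 := by
  have hne := h.1.1
  have hl := List.length_pos_iff.mpr hne
  conv_lhs => rw [← List.cons_head_tail hne]
  rw [List.countP_cons]
  have h1 : G.src (l.head hne) = w := h.1.2.2.1
  rw [if_pos ((bsrc_true_iff G w _).mpr h1)]
  have h2 : List.countP (bsrc G w) l.tail = 0 := by
    rw [List.countP_eq_zero]
    intro e he
    obtain ⟨j, hj, rfl⟩ := List.mem_iff_getElem.mp he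
    have hjl : j + 1 < l.length := by
      have := l.length_tail
      omega
    have heq : l.tail[j]'hj = l[j + 1]'hjl := by
      rw [List.getElem_tail]
    rw [heq]
    intro hc
    exact h.2 (j + 1) hjl (by omega) ((bsrc_true_iff G w _).mp hc)
  omega

/-- Blocks of the modified path. -/
def nrBlocks (p : ℕ → E) (st : ℕ → ℕ) (LL : ℕ → List E)
    (hLLne : ∀ k, LL k ≠ []) (x : ℕ → Bool) : ℕ → {l : List E // l ≠ []} :=
  fun k => ⟨lpow (LL k) (1 + (x k).toNat) ++ sl p (st k) (st (k + 1)), by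
    have h1 : 0 < (LL k).length := List.length_pos_iff.mpr (hLLne k)
    rw [← List.length_pos_iff]
    simp only [List.length_append, lpow_length]
    have h2 : 0 < (1 + (x k).toNat) * (LL k).length := Nat.mul_pos (by omega) h1
    omega⟩

section NRCount

variable {G : DGraph V E} {p : ℕ → E} {st : ℕ → ℕ} {LL : ℕ → List E}

lemma nrLLne (hLL : ∀ k, WFC G (G.src (p (st k))) (LL k)) (k : ℕ) : LL k ≠ [] :=
  (hLL k).1.1

lemma nrBlocks_head (hLL : ∀ k, WFC G (G.src (p (st k))) (LL k)) (x : ℕ → Bool) (k : ℕ)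
    (h : (nrBlocks p st LL (nrLLne hLL) x k).1 ≠ []) :
    ((nrBlocks p st LL (nrLLne hLL) x k).1).head h = (LL k).head (nrLLne hLL k) := by
  show (lpow (LL k) (1 + (x k).toNat) ++ sl p (st k) (st (k + 1))).head _ = _
  refine (List.head_append_of_ne_nil
    (lpow_ne_nil (nrLLne hLL k) (show 0 < 1 + (x k).toNat by omega))).trans ?_
  exact lpow_head (nrLLne hLL k) (by omega) _

lemma nrBlocks_getLast (hst : StrictMono st)
    (hLL : ∀ k, WFC G (G.src (p (st k))) (LL k)) (x : ℕ → Bool) (k : ℕ)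
    (h : (nrBlocks p st LL (nrLLne hLL) x k).1 ≠ []) :
    ((nrBlocks p st LL (nrLLne hLL) x k).1).getLast h = p (st (k + 1) - 1) := by
  have hstk : st k < st (k + 1) := hst (by omega)
  show (lpow (LL k) (1 + (x k).toNat) ++ sl p (st k) (st (k + 1))).getLast _ = _
  refine (List.getLast_append_of_ne_nil _ (sl_ne_nil p hstk)).trans ?_
  exact sl_getLast p hstk _

lemma nrQ_isInfPath (hp : G.IsInfPath p) (hst : StrictMono st)
    (hLL : ∀ k, WFC G (G.src (p (st k))) (LL k)) (x : ℕ → Bool) :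
    G.IsInfPath (catSeq (nrBlocks p st LL (nrLLne hLL) x)) := by
  have hstk : ∀ k, st k < st (k + 1) := fun k => hst (by omega)
  apply catSeq_isInfPath
  · intro k
    have hcl : G.IsClosedAt (lpow (LL k) (1 + (x k).toNat)) (G.src (p (st k))) :=
      lpow_closed G (hLL k).1 (by omega)
    show G.IsPathList (lpow (LL k) (1 + (x k).toNat) ++ sl p (st k) (st (k + 1)))
    rw [DGraph.IsPathList, List.Chain', List.isChain_append]
    refine ⟨hcl.2.1, sl_chain' G hp _ _, ?_⟩
    intro e he f hf
    rw [List.getLast?_eq_getLast hcl.1] at he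
    rw [List.head?_eq_head (sl_ne_nil p (hstk k))] at hf
    simp only [Option.mem_def, Option.some.injEq] at he hf
    subst he; subst hf
    rw [hcl.2.2.2, sl_head p (hstk k)]
  · intro k
    rw [nrBlocks_getLast hst hLL x k, nrBlocks_head hLL x (k + 1)]
    have h0 : 0 < st (k + 1) := by
      have := hstk k
      omega
    have h2 := hp (st (k + 1) - 1)
    have h3 : st (k + 1) - 1 + 1 = st (k + 1) := by omega
    rw [h3] at h2
    rw [h2]
    exact ((hLL (k + 1)).1.2.2.1).symm

/-- Per-block count of sources equal to the site vertex `V k`. -/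
lemma nrBlocks_countP
    (hLL : ∀ k, WFC G (G.src (p (st k))) (LL k))
    (havoid : ∀ k m, k ≠ m → ∀ e ∈ LL m, G.src e ≠ G.src (p (st k)))
    (x : ℕ → Bool) (k m : ℕ) :
    List.countP (bsrc G (G.src (p (st k)))) (nrBlocks p st LL (nrLLne hLL) x m).1 =
    (if m = k then 1 + (x k).toNat else 0) +
      List.countP (bsrc G (G.src (p (st k)))) (sl p (st m) (st (m + 1))) := by
  show List.countP _ (lpow (LL m) (1 + (x m).toNat) ++ sl p (st m) (st (m + 1))) = _
  rw [List.countP_append, countP_lpow]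
  congr 1
  by_cases hmk : m = k
  · subst hmk
    rw [if_pos rfl, countP_eq_one_of_wfc G (hLL m)]
    ring
  · rw [if_neg hmk]
    have h0 : List.countP (bsrc G (G.src (p (st k)))) (LL m) = 0 := by
      rw [List.countP_eq_zero]
      intro e he
      intro hc
      exact havoid k m (fun h => hmk h.symm) e he ((bsrc_true_iff G _ _).mp hc)
    rw [h0]
    ring

/-- Cumulative count over the first `K` blocks. -/
lemma nrQ_countP_prefix (hst : StrictMono st)
    (hLL : ∀ k, WFC G (G.src (p (st k))) (LL k))
    (havoid : ∀ k m, k ≠ m → ∀ e ∈ LL m, G.src e ≠ G.src (p (st k)))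
    (x : ℕ → Bool) (k : ℕ) : ∀ K : ℕ,
    List.countP (bsrc G (G.src (p (st k))))
      (sl (catSeq (nrBlocks p st LL (nrLLne hLL) x)) 0
        (sig (nrBlocks p st LL (nrLLne hLL) x) K)) =
    (if k < K then 1 + (x k).toNat else 0) +
      List.countP (bsrc G (G.src (p (st k)))) (sl p (st 0) (st K)) := by
  intro K
  induction K with
  | zero =>
    rw [sig_zero]
    have h1 : sl (catSeq (nrBlocks p st LL (nrLLne hLL) x)) 0 0 = [] := by
      rw [← List.length_eq_zero_iff]
      simp
    have h2 : sl p (st 0) (st 0) = [] := by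
      rw [← List.length_eq_zero_iff]
      simp
    rw [h1, h2]
    simp
  | succ K ih =>
    have hmono1 : sig (nrBlocks p st LL (nrLLne hLL) x) K ≤
        sig (nrBlocks p st LL (nrLLne hLL) x) (K + 1) :=
      (sig_strictMono _).monotone (by omega)
    rw [← sl_append (catSeq (nrBlocks p st LL (nrLLne hLL) x)) (Nat.zero_le _) hmono1]
    rw [List.countP_append, catSeq_sl_block, ih]
    have hmono2 : st K ≤ st (K + 1) := hst.monotone (by omega)
    have hmono3 : st 0 ≤ st K := hst.monotone (by omega)
    rw [← sl_append p hmono3 hmono2, List.countP_append]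
    rw [nrBlocks_countP hLL havoid x k K]
    by_cases h1 : k < K
    · rw [if_pos h1, if_pos (show k < K + 1 by omega), if_neg (show ¬ K = k by omega)]
      ring
    · by_cases h2 : k = K
      · subst h2
        rw [if_neg h1, if_pos (show k < k + 1 by omega), if_pos rfl]
        ring
      · rw [if_neg h1, if_neg (show ¬ k < K + 1 by omega), if_neg (show ¬ K = k by omega)]
        ring

end NRCount

section NRMain

variable {G : DGraph V E} {p : ℕ → E} {st : ℕ → ℕ} {LL : ℕ → List E}

lemma nr_cutoff (hst : StrictMono st) (k : ℕ)
    (hvfin : {i : ℕ | G.src (p i) = G.src (p (st k))}.Finite) :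
    ∃ K, k < K ∧ ∀ i, st K ≤ i → G.src (p i) ≠ G.src (p (st k)) := by
  obtain ⟨M, hM⟩ := hvfin.bddAbove
  refine ⟨max (k + 1) (M + 1), by omega, ?_⟩
  intro i hi hc
  have h1 : i ≤ M := hM hc
  have h2 : max (k + 1) (M + 1) ≤ st (max (k + 1) (M + 1)) := hst.le_apply
  omega

lemma nrQ_no_late_occ (hst : StrictMono st)
    (hLL : ∀ k, WFC G (G.src (p (st k))) (LL k))
    (havoid : ∀ k m, k ≠ m → ∀ e ∈ LL m, G.src e ≠ G.src (p (st k)))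
    (x : ℕ → Bool) (k K : ℕ) (hkK : k < K)
    (hcut : ∀ i, st K ≤ i → G.src (p i) ≠ G.src (p (st k))) :
    ∀ n, sig (nrBlocks p st LL (nrLLne hLL) x) K ≤ n →
      G.src (catSeq (nrBlocks p st LL (nrLLne hLL) x) n) ≠ G.src (p (st k)) := by
  intro n hn
  obtain ⟨m, j, hj, rfl⟩ := catSeq_rep (nrBlocks p st LL (nrLLne hLL) x) n
  have hmK : K ≤ m := by
    by_contra hlt
    have h1 : sig (nrBlocks p st LL (nrLLne hLL) x) (m + 1) ≤
        sig (nrBlocks p st LL (nrLLne hLL) x) K := (sig_strictMono _).monotone (by omega)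
    have h2 := sig_succ (nrBlocks p st LL (nrLLne hLL) x) m
    omega
  rw [catSeq_apply (nrBlocks p st LL (nrLLne hLL) x) m j hj]
  have hj' : j < (lpow (LL m) (1 + (x m).toNat) ++ sl p (st m) (st (m + 1))).length := hj
  show G.src ((lpow (LL m) (1 + (x m).toNat) ++ sl p (st m) (st (m + 1)))[j]'hj') ≠ _
  rw [List.getElem_append]
  split
  · rename_i h'
    rw [lpow_getElem (nrLLne hLL m)]
    intro hc
    exact havoid k m (by omega) _ (List.getElem_mem _) hc
  · rename_i h'
    rw [sl_getElem]
    apply hcut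
    have := hst.monotone hmK
    omega

lemma nrQ_countP_stable (hst : StrictMono st)
    (hLL : ∀ k, WFC G (G.src (p (st k))) (LL k))
    (havoid : ∀ k m, k ≠ m → ∀ e ∈ LL m, G.src e ≠ G.src (p (st k)))
    (x : ℕ → Bool) (k K : ℕ) (hkK : k < K)
    (hcut : ∀ i, st K ≤ i → G.src (p i) ≠ G.src (p (st k))) :
    ∀ N, sig (nrBlocks p st LL (nrLLne hLL) x) K ≤ N →
    List.countP (bsrc G (G.src (p (st k))))
      (sl (catSeq (nrBlocks p st LL (nrLLne hLL) x)) 0 N) =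
    (1 + (x k).toNat) +
      List.countP (bsrc G (G.src (p (st k)))) (sl p (st 0) (st K)) := by
  intro N hN
  rw [← sl_append (catSeq (nrBlocks p st LL (nrLLne hLL) x)) (Nat.zero_le _) hN,
    List.countP_append, nrQ_countP_prefix hst hLL havoid x k K, if_pos hkK]
  have hz : List.countP (bsrc G (G.src (p (st k))))
      (sl (catSeq (nrBlocks p st LL (nrLLne hLL) x))
        (sig (nrBlocks p st LL (nrLLne hLL) x) K) N) = 0 := by
    rw [List.countP_eq_zero]
    intro e he hc
    obtain ⟨tt, htt, rfl⟩ := List.mem_iff_getElem.mp he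
    rw [sl_getElem] at hc
    exact nrQ_no_late_occ hst hLL havoid x k K hkK hcut _ (by omega)
      ((bsrc_true_iff G _ _).mp hc)
  omega

lemma nrQ_sep (hst : StrictMono st)
    (hLL : ∀ k, WFC G (G.src (p (st k))) (LL k))
    (havoid : ∀ k m, k ≠ m → ∀ e ∈ LL m, G.src e ≠ G.src (p (st k)))
    (hVinj : ∀ k m, k ≠ m → G.src (p (st k)) ≠ G.src (p (st m)))
    (hvfin : ∀ u, {i : ℕ | G.src (p i) = u}.Finite)
    (x y : ℕ → Bool)
    (h : DGraph.TailEquiv (catSeq (nrBlocks p st LL (nrLLne hLL) x))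
      (catSeq (nrBlocks p st LL (nrLLne hLL) y))) :
    ∃ N, ∀ k, N ≤ k → x k = y k := by
  obtain ⟨s, t, hq⟩ := h
  have hbad : ∀ (z : ℕ → Bool) (s' : ℕ),
      {k : ℕ | ∃ n, n < s' ∧
        G.src (catSeq (nrBlocks p st LL (nrLLne hLL) z) n) = G.src (p (st k))}.Finite := by
    intro z s'
    apply Set.Finite.subset (Set.Finite.biUnion (Set.finite_Iio s')
      (fun n (_ : n ∈ Set.Iio s') =>
        Set.Subsingleton.finite (s :=
          {k : ℕ | G.src (p (st k)) = G.src (catSeq (nrBlocks p st LL (nrLLne hLL) z) n)})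
        (fun a ha b hb => by
          by_contra hab
          exact hVinj a b hab (ha.trans hb.symm))))
    rintro k ⟨n, hn, hv⟩
    exact Set.mem_biUnion hn hv.symm
  obtain ⟨N0, hN0⟩ := ((hbad x s).union (hbad y t)).bddAbove
  refine ⟨N0 + 1, ?_⟩
  intro k hk
  have hknotx : ∀ n, n < s →
      G.src (catSeq (nrBlocks p st LL (nrLLne hLL) x) n) ≠ G.src (p (st k)) := by
    intro n hn hc
    have : k ∈ {k : ℕ | ∃ n, n < s ∧
        G.src (catSeq (nrBlocks p st LL (nrLLne hLL) x) n) = G.src (p (st k))} := ⟨n, hn, hc⟩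
    have := hN0 (Set.mem_union_left _ this)
    omega
  have hknoty : ∀ n, n < t →
      G.src (catSeq (nrBlocks p st LL (nrLLne hLL) y) n) ≠ G.src (p (st k)) := by
    intro n hn hc
    have : k ∈ {k : ℕ | ∃ n, n < t ∧
        G.src (catSeq (nrBlocks p st LL (nrLLne hLL) y) n) = G.src (p (st k))} := ⟨n, hn, hc⟩
    have := hN0 (Set.mem_union_right _ this)
    omega
  obtain ⟨K, hkK, hcut⟩ := nr_cutoff hst k (hvfin _)
  set R := max (sig (nrBlocks p st LL (nrLLne hLL) x) K)
    (sig (nrBlocks p st LL (nrLLne hLL) y) K) with hR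
  have hxtot := nrQ_countP_stable hst hLL havoid x k K hkK hcut (s + R) (by omega)
  have hytot := nrQ_countP_stable hst hLL havoid y k K hkK hcut (t + R) (by omega)
  have hsplitx : List.countP (bsrc G (G.src (p (st k))))
      (sl (catSeq (nrBlocks p st LL (nrLLne hLL) x)) 0 (s + R)) =
      List.countP (bsrc G (G.src (p (st k))))
        (sl (catSeq (nrBlocks p st LL (nrLLne hLL) x)) 0 s) +
      List.countP (bsrc G (G.src (p (st k))))
        (sl (catSeq (nrBlocks p st LL (nrLLne hLL) x)) s (s + R)) := by
    rw [← sl_append (catSeq (nrBlocks p st LL (nrLLne hLL) x)) (Nat.zero_le s) (by omega),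
      List.countP_append]
  have hsplity : List.countP (bsrc G (G.src (p (st k))))
      (sl (catSeq (nrBlocks p st LL (nrLLne hLL) y)) 0 (t + R)) =
      List.countP (bsrc G (G.src (p (st k))))
        (sl (catSeq (nrBlocks p st LL (nrLLne hLL) y)) 0 t) +
      List.countP (bsrc G (G.src (p (st k))))
        (sl (catSeq (nrBlocks p st LL (nrLLne hLL) y)) t (t + R)) := by
    rw [← sl_append (catSeq (nrBlocks p st LL (nrLLne hLL) y)) (Nat.zero_le t) (by omega),
      List.countP_append]
  have hzx : List.countP (bsrc G (G.src (p (st k))))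
      (sl (catSeq (nrBlocks p st LL (nrLLne hLL) x)) 0 s) = 0 := by
    rw [List.countP_eq_zero]
    intro e he hc
    obtain ⟨tt, htt, rfl⟩ := List.mem_iff_getElem.mp he
    rw [sl_getElem] at hc
    simp only [sl_length] at htt
    exact hknotx _ (by omega) ((bsrc_true_iff G _ _).mp hc)
  have hzy : List.countP (bsrc G (G.src (p (st k))))
      (sl (catSeq (nrBlocks p st LL (nrLLne hLL) y)) 0 t) = 0 := by
    rw [List.countP_eq_zero]
    intro e he hc
    obtain ⟨tt, htt, rfl⟩ := List.mem_iff_getElem.mp he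
    rw [sl_getElem] at hc
    simp only [sl_length] at htt
    exact hknoty _ (by omega) ((bsrc_true_iff G _ _).mp hc)
  have heqsl : sl (catSeq (nrBlocks p st LL (nrLLne hLL) x)) s (s + R) =
      sl (catSeq (nrBlocks p st LL (nrLLne hLL) y)) t (t + R) := sl_shift_eq hq R
  rw [hsplitx, hzx, heqsl] at hxtot
  rw [hsplity, hzy] at hytot
  have : (x k).toNat = (y k).toNat := by omega
  cases hxk : x k <;> cases hyk : y k <;> simp_all

lemma nrQ_not_rational (hst : StrictMono st)
    (hLL : ∀ k, WFC G (G.src (p (st k))) (LL k))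
    (havoid : ∀ k m, k ≠ m → ∀ e ∈ LL m, G.src e ≠ G.src (p (st k)))
    (hvfin : ∀ u, {i : ℕ | G.src (p i) = u}.Finite)
    (x : ℕ → Bool) :
    ¬ G.IsRational (catSeq (nrBlocks p st LL (nrLLne hLL) x)) := by
  rintro ⟨m, d, hd, hper⟩
  have hsigm : m ≤ sig (nrBlocks p st LL (nrLLne hLL) x) m := sig_le_self _ m
  have hsite : G.src (catSeq (nrBlocks p st LL (nrLLne hLL) x)
      (sig (nrBlocks p st LL (nrLLne hLL) x) m)) = G.src (p (st m)) := by
    have h0 : 0 < blen (nrBlocks p st LL (nrLLne hLL) x) m :=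
      blen_pos _ m
    have := catSeq_apply (nrBlocks p st LL (nrLLne hLL) x) m 0 h0
    rw [Nat.add_zero] at this
    rw [this]
    have h0' : 0 < (lpow (LL m) (1 + (x m).toNat) ++ sl p (st m) (st (m + 1))).length := h0
    show G.src ((lpow (LL m) (1 + (x m).toNat) ++ sl p (st m) (st (m + 1)))[0]'h0') = _
    rw [List.getElem_append]
    have hlp : 0 < (lpow (LL m) (1 + (x m).toNat)).length := by
      rw [lpow_length]
      have := List.length_pos_iff.mpr (nrLLne hLL m)
      have h2 : 0 < (1 + (x m).toNat) := by omega
      exact Nat.mul_pos h2 this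
    rw [dif_pos hlp, lpow_getElem (nrLLne hLL m)]
    have h00 : 0 % (LL m).length = 0 := by
      apply Nat.zero_mod
    simp only [h00]
    exact closed_getElem_zero G (hLL m).1 (List.length_pos_iff.mpr (nrLLne hLL m))
  have hper' : ∀ n, m ≤ n → catSeq (nrBlocks p st LL (nrLLne hLL) x) (n + d) =
      catSeq (nrBlocks p st LL (nrLLne hLL) x) n := by
    intro n hn
    have := hper (n - m)
    rw [show m + (n - m) + d = n + d by omega, show m + (n - m) = n by omega] at this
    exact this
  have hrep : ∀ r : ℕ, catSeq (nrBlocks p st LL (nrLLne hLL) x)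
      (sig (nrBlocks p st LL (nrLLne hLL) x) m + r * d) =
      catSeq (nrBlocks p st LL (nrLLne hLL) x)
        (sig (nrBlocks p st LL (nrLLne hLL) x) m) := by
    intro r
    induction r with
    | zero => simp
    | succ r ih =>
      rw [show sig (nrBlocks p st LL (nrLLne hLL) x) m + (r + 1) * d =
        (sig (nrBlocks p st LL (nrLLne hLL) x) m + r * d) + d by ring]
      rw [hper' _ (by omega), ih]
  obtain ⟨K, hkK, hcut⟩ := nr_cutoff hst m (hvfin _)
  set r := sig (nrBlocks p st LL (nrLLne hLL) x) K with hr
  have hge : sig (nrBlocks p st LL (nrLLne hLL) x) K ≤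
      sig (nrBlocks p st LL (nrLLne hLL) x) m + r * d := by
    have : r ≤ r * d := Nat.le_mul_of_pos_right r hd
    omega
  exact nrQ_no_late_occ hst hLL havoid x m K hkK hcut _ hge
    (by rw [hrep r]; exact hsite)

end NRMain

/-! ### Assembling the non-rich case -/

lemma nonrich_contra (G : DGraph V E)
    (hcount : ∃ F : {q : ℕ → E // G.IsInfPath q ∧ ¬ G.IsRational q} → ℕ,
      ∀ a b, F a = F b → DGraph.TailEquiv a.1 b.1)
    (NR : ∀ (u : V) (l g : List E), WFC G u l → WFC G u g → l = g)
    {p : ℕ → E} (hp : G.IsInfPath p) (hirr : ¬ G.IsRational p)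
    (hSinf : {i : ℕ | G.BaseOfClosed (G.src (p i))}.Infinite) : False := by
  classical
  have hvfin : ∀ u, {i : ℕ | G.src (p i) = u}.Finite := by
    intro u
    by_contra hfin
    have hinf : {i : ℕ | G.src (p i) = u}.Infinite := hfin
    exact hirr (returns_rational G hp (Nat.nth_strictMono hinf)
      (fun j => Nat.nth_mem_of_infinite hinf j) (NR u))
  set loopAt : V → List E := fun u => if h : ∃ l, WFC G u l then h.choose else []
    with hloopAt
  have hloop : ∀ u, G.BaseOfClosed u → WFC G u (loopAt u) := by
    intro u hu
    have h : ∃ l, WFC G u l := wfc_exists G hu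
    simp only [hloopAt, dif_pos h]
    exact h.choose_spec
  have hexG : ∀ (W : Set V), W.Finite → ∀ n : ℕ,
      ∃ i, G.BaseOfClosed (G.src (p i)) ∧ n < i ∧ G.src (p i) ∉ W := by
    intro W hW n
    have hT : {i : ℕ | G.src (p i) ∈ W}.Finite := by
      have heq : {i : ℕ | G.src (p i) ∈ W} = ⋃ u ∈ W, {i : ℕ | G.src (p i) = u} := by
        ext i; simp
      rw [heq]
      exact hW.biUnion (fun u _ => hvfin u)
    obtain ⟨i, hi, hni⟩ := (hSinf.diff hT).exists_gt n
    exact ⟨i, hi.1, hni, hi.2⟩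
  set Wof : List ℕ → Set V := fun prev =>
    ⋃ a ∈ {a : ℕ | a ∈ prev}, ({G.src (p a)} ∪ G.src '' {e | e ∈ loopAt (G.src (p a))})
    with hWof
  have hWfin : ∀ prev, (Wof prev).Finite := by
    intro prev
    exact Set.Finite.biUnion (prev.finite_toSet)
      (fun a _ => (Set.finite_singleton _).union ((List.finite_toSet _).image _))
  set pick : List ℕ → ℕ := fun prev =>
    (hexG (Wof prev) (hWfin prev) (prev.foldr max 0)).choose with hpickdef
  have hpick : ∀ prev, G.BaseOfClosed (G.src (p (pick prev))) ∧
      prev.foldr max 0 < pick prev ∧ G.src (p (pick prev)) ∉ Wof prev := by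
    intro prev
    exact (hexG (Wof prev) (hWfin prev) (prev.foldr max 0)).choose_spec
  set chain : ℕ → List ℕ :=
    fun n => Nat.rec [] (fun _ ih => ih ++ [pick ih]) n with hchain
  set sites : ℕ → ℕ := fun n => pick (chain n) with hsites
  have hchainsucc : ∀ n, chain (n + 1) = chain n ++ [sites n] := fun n => rfl
  have hfold : ∀ (l : List ℕ) (a : ℕ), a ∈ l → a ≤ l.foldr max 0 := by
    intro l
    induction l with
    | nil => intro a ha; simp at ha
    | cons b l ih =>
      intro a ha
      rcases List.mem_cons.mp ha with rfl | ha
      · exact le_max_left _ _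
      · exact le_trans (ih a ha) (le_max_right _ _)
  have hmemchain : ∀ n a, a ∈ chain n ↔ ∃ m, m < n ∧ sites m = a := by
    intro n
    induction n with
    | zero => intro a; show a ∈ ([] : List ℕ) ↔ _; simp
    | succ n ih =>
      intro a
      rw [hchainsucc n, List.mem_append]
      constructor
      · rintro (h | h)
        · obtain ⟨m, hm, rfl⟩ := (ih a).mp h
          exact ⟨m, by omega, rfl⟩
        · simp at h
          exact ⟨n, by omega, h.symm⟩
      · rintro ⟨m, hm, rfl⟩
        by_cases hmn : m < n
        · exact Or.inl ((ih _).mpr ⟨m, hmn, rfl⟩)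
        · have : m = n := by omega
          subst this
          simp
  have hmono : StrictMono sites := by
    apply strictMono_nat_of_lt_succ
    intro n
    have h1 : sites n ∈ chain (n + 1) := (hmemchain (n + 1) _).mpr ⟨n, by omega, rfl⟩
    have h2 := hfold (chain (n + 1)) _ h1
    have h3 := (hpick (chain (n + 1))).2.1
    calc sites n ≤ (chain (n + 1)).foldr max 0 := h2
      _ < pick (chain (n + 1)) := h3
  have hbase : ∀ n, G.BaseOfClosed (G.src (p (sites n))) := fun n => (hpick (chain n)).1
  -- one-directional avoidance
  have havoid1 : ∀ m n, m < n → G.src (p (sites n)) ≠ G.src (p (sites m)) ∧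
      ∀ e ∈ loopAt (G.src (p (sites m))), G.src e ≠ G.src (p (sites n)) := by
    intro m n hmn
    have hmem : sites m ∈ chain n := (hmemchain n _).mpr ⟨m, hmn, rfl⟩
    have hno := (hpick (chain n)).2.2
    constructor
    · intro hc
      apply hno
      refine Set.mem_biUnion hmem ?_
      exact Or.inl hc
    · intro e he hc
      apply hno
      refine Set.mem_biUnion hmem ?_
      exact Or.inr ⟨e, he, hc⟩
  set LL : ℕ → List E := fun n => loopAt (G.src (p (sites n))) with hLLdef
  have hLL : ∀ k, WFC G (G.src (p (sites k))) (LL k) := fun k => hloop _ (hbase k)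
  have hVinj : ∀ k m, k ≠ m → G.src (p (sites k)) ≠ G.src (p (sites m)) := by
    intro k m hkm
    rcases Nat.lt_or_ge k m with h | h
    · exact fun hc => (havoid1 k m h).1 hc.symm
    · exact (havoid1 m k (by omega)).1
  have havoid : ∀ k m, k ≠ m → ∀ e ∈ LL m, G.src e ≠ G.src (p (sites k)) := by
    intro k m hkm e he
    rcases Nat.lt_or_ge m k with h | h
    · exact (havoid1 m k h).2 e he
    · have hmk : k < m := by omega
      intro hc
      -- rotate LL m at the occurrence of V k, parse at V k, derive contradiction
      obtain ⟨⟨t, ht⟩, rfl⟩ := List.mem_iff_get.mp he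
      obtain ⟨c', hc', hmemc'⟩ := closed_rotate G (u := G.src (p (sites k))) (hLL m).1 ht hc
      obtain ⟨m', hm', hceq⟩ := wfc_parse G (NR _) (hLL k) c' hc'
      have hhead : (LL m).head (nrLLne hLL m) ∈ c' := by
        rw [hmemc']
        exact List.head_mem _
      rw [hceq] at hhead
      have hmem2 : (LL m).head (nrLLne hLL m) ∈ LL k := mem_lpow hhead
      have := (havoid1 k m hmk).2 _ hmem2
      exact this (hLL m).1.2.2.1
  exact family_contra G hcount
    (fun x => catSeq (nrBlocks p sites LL (nrLLne hLL) x))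
    (fun x => nrQ_isInfPath hp hmono hLL x)
    (fun x => nrQ_not_rational hmono hLL havoid hvfin x)
    (fun x y h => nrQ_sep hmono hLL havoid hVinj hvfin x y h)

end IrrAux

open DGraph in
/-- If the irrational infinite paths of a graph fall into at most countably many
tail-equivalence classes, then any irrational infinite path `p` has only finitely
many vertices lying on closed paths; consequently `p = γ q` with `q` an infinite
path none of whose vertices lies on a closed path. -/
theorem finitely_many_closed_vertices_on_irrational_path {V E : Type*}
    (G : DGraph V E)
    (hcount : ∃ F : {p : ℕ → E // G.IsInfPath p ∧ ¬ G.IsRational p} → ℕ,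
      ∀ a b, F a = F b → TailEquiv a.1 b.1) :
    ∀ p : ℕ → E, G.IsInfPath p → ¬ G.IsRational p →
      {i : ℕ | G.BaseOfClosed (G.src (p i))}.Finite ∧
      ∃ k : ℕ, ∀ i ≥ k, ¬ G.BaseOfClosed (G.src (p i)) := by
  intro p hp hirr
  have hfin : {i : ℕ | G.BaseOfClosed (G.src (p i))}.Finite := by
    by_contra hinf
    have hSinf : {i : ℕ | G.BaseOfClosed (G.src (p i))}.Infinite := hinf
    by_cases hrich : ∃ (w : V) (l g : List E),
        IrrAux.WFC G w l ∧ IrrAux.WFC G w g ∧ l ≠ g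
    · exact IrrAux.rich_contra G hcount hrich
    · have NR : ∀ (u : V) (l g : List E),
          IrrAux.WFC G u l → IrrAux.WFC G u g → l = g := by
        intro u l g h1 h2
        by_contra hne
        exact hrich ⟨u, l, g, h1, h2, hne⟩
      exact IrrAux.nonrich_contra G hcount NR hp hirr hSinf
  refine ⟨hfin, ?_⟩
  obtain ⟨M, hM⟩ := hfin.bddAbove
  refine ⟨M + 1, ?_⟩
  intro i hi hbase
  have := hM (show i ∈ {i : ℕ | G.BaseOfClosed (G.src (p i))} from hbase)
  omega
end

section
/- Let E be a directed graph with no sinks in which every cycle has an exit, every vertex lies on some infinite path, and no vertex of E is a line point. Suppose the irrational infinite paths of E fall into at most countably many tail-equivalence classes, with representatives α₁, α₂, … such that no vertex on any αᵢ lies on a closed path. Then there exists an infinite irrational path β in E that is not tail-equivalent to any αᵢ. (Hence no such graph exists; equivalently, any graph whose irrational infinite paths form at most countably many tail-equivalence classes must contain a line point or a cycle without exits.) -/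
namespace DGraph

variable {V E : Type*}

variable (G : DGraph V E) (d0 : E)

lemma aux_pathlist_rel {l : List E} (hp : G.IsPathList l) {i : ℕ} (hi : i + 1 < l.length) :
    G.rng (l.getD i d0) = G.src (l.getD (i+1) d0) := by
  have h := List.isChain_iff_getElem.mp hp i (by omega)
  rw [List.getD_eq_getElem l d0 (by omega), List.getD_eq_getElem l d0 hi]
  simpa [List.get_eq_getElem] using h

lemma aux_reaches_getD {l : List E} (hp : G.IsPathList l) :
    ∀ i, i < l.length → G.Reaches (G.src (l.getD 0 d0)) (G.src (l.getD i d0)) := by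
  intro i
  induction i with
  | zero => intro _; exact Relation.ReflTransGen.refl
  | succ k ih =>
    intro hi
    exact Relation.ReflTransGen.tail (ih (by omega))
      ⟨l.getD k d0, rfl, aux_pathlist_rel G d0 hp hi⟩

lemma aux_getD_prefix {l L : List E} (h : l <+: L) {i : ℕ} (hi : i < l.length) :
    L.getD i d0 = l.getD i d0 := by
  rw [List.getD_eq_getElem l d0 hi, List.getD_eq_getElem L d0 (lt_of_lt_of_le hi h.length_le)]
  exact (h.getElem hi).symm

lemma aux_pathlist_append {l1 l2 : List E} (h1 : G.IsPathList l1) (h2 : G.IsPathList l2)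
    (hj : ∀ (h1' : l1 ≠ []) (h2' : l2 ≠ []), G.rng (l1.getLast h1') = G.src (l2.head h2')) :
    G.IsPathList (l1 ++ l2) := by
  rw [IsPathList, List.Chain', List.isChain_append]
  refine ⟨h1, h2, ?_⟩
  intro x hx y hy
  have h1' : l1 ≠ [] := by rintro rfl; simp at hx
  have h2' : l2 ≠ [] := by rintro rfl; simp at hy
  rw [List.getLast?_eq_getLast h1'] at hx
  rw [List.head?_eq_head h2'] at hy
  simp only [Option.mem_def, Option.some.injEq] at hx hy
  rw [← hx, ← hy]
  exact hj h1' h2'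

lemma aux_reaches_toList {v w : V} (h : G.Reaches v w) :
    ∃ l : List E, G.IsPathList l ∧
      ((l = [] ∧ w = v) ∨ ∃ hl : l ≠ [], G.src (l.head hl) = v ∧ G.rng (l.getLast hl) = w) := by
  induction h with
  | refl => exact ⟨[], List.isChain_nil, Or.inl ⟨rfl, rfl⟩⟩
  | @tail b c hab hbc ih =>
    obtain ⟨l, hp, hcase⟩ := ih
    obtain ⟨e, hse, hre⟩ := hbc
    refine ⟨l ++ [e], ?_, Or.inr ⟨by simp, ?_, ?_⟩⟩
    · refine aux_pathlist_append G hp (List.isChain_singleton e) ?_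
      intro h1' _
      rcases hcase with ⟨rfl, _⟩ | ⟨hl, _, hlast⟩
      · exact absurd rfl h1'
      · simp only [List.head_cons]
        rw [hlast, hse]
    · rcases hcase with ⟨rfl, hbv⟩ | ⟨hl, hhead, _⟩
      · simpa [hbv] using hse
      · rw [List.head_append]
        simp [hl, List.isEmpty_iff, hhead]
    · rw [List.getLast_concat]
      exact hre

lemma aux_bif_of_closed
    (hexit : ∀ l : List E, G.IsCycle l →
      ∃ (f : E) (i : Fin l.length), G.src f = G.src (l.get i) ∧ f ≠ l.get i) :
    ∀ n (l : List E), l.length = n → ∀ (hne : l ≠ []), G.IsPathList l →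
      G.rng (l.getD (l.length - 1) d0) = G.src (l.getD 0 d0) →
      ∃ w, G.Reaches (G.src (l.getD 0 d0)) w ∧ G.Bifurcates w := by
  intro n
  induction n using Nat.strong_induction_on with
  | _ n ih =>
  intro l hlen hne hp hc
  by_cases hnd : (l.map G.src).Nodup
  · have hcyc : G.IsCycle l := by
      refine ⟨hp, hnd, hne, ?_⟩
      rw [List.getLast_eq_getElem, List.head_eq_getElem,
        ← List.getD_eq_getElem l d0, ← List.getD_eq_getElem l d0]
      exact hc
    obtain ⟨f, i, hsf, hfne⟩ := hexit l hcyc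
    refine ⟨G.src (l.get i), ?_, ⟨f, l.get i, hfne, hsf, rfl⟩⟩
    have := aux_reaches_getD G d0 hp i.1 i.2
    rwa [List.getD_eq_getElem l d0 i.2, ← List.get_eq_getElem] at this
  · have hninj : ¬ Function.Injective (l.map G.src).get := fun hinj =>
      hnd (List.nodup_iff_injective_get.mpr hinj)
    obtain ⟨a, b, hab, hne'⟩ : ∃ a b : Fin (l.map G.src).length,
        (l.map G.src).get a = (l.map G.src).get b ∧ a ≠ b := by
      by_contra hcon
      push_neg at hcon
      exact hninj fun a b h => hcon a b h
    have hmlen : (l.map G.src).length = l.length := List.length_map _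
    -- extract a' < b' with equal sources
    obtain ⟨a', b', ha'b', hb'len, hsab⟩ : ∃ a' b', a' < b' ∧ b' < l.length ∧
        G.src (l.getD a' d0) = G.src (l.getD b' d0) := by
      have key : ∀ (x y : Fin (l.map G.src).length), x.1 < y.1 →
          (l.map G.src).get x = (l.map G.src).get y →
          ∃ a' b', a' < b' ∧ b' < l.length ∧
            G.src (l.getD a' d0) = G.src (l.getD b' d0) := by
        intro x y hxy hgets
        refine ⟨x.1, y.1, hxy, by omega, ?_⟩
        rw [List.getD_eq_getElem l d0 (by omega), List.getD_eq_getElem l d0 (by omega)]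
        simpa [List.get_eq_getElem, List.getElem_map] using hgets
      rcases lt_or_gt_of_ne (Fin.val_ne_of_ne hne') with h | h
      · exact key a b h hab
      · exact key b a h hab.symm
    set l2 := (l.drop a').take (b' - a') with hl2
    have hlen2 : l2.length = b' - a' := by
      simp [hl2, List.length_take, List.length_drop]; omega
    have hl2ne : l2 ≠ [] := List.ne_nil_of_length_pos (by omega)
    have hp2 : G.IsPathList l2 :=
      hp.infix (((List.take_prefix _ _).isInfix).trans ((List.drop_suffix _ _).isInfix))
    have hget2 : ∀ i, i < l2.length → l2.getD i d0 = l.getD (a' + i) d0 := by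
      intro i hi
      rw [List.getD_eq_getElem l2 d0 hi, List.getD_eq_getElem l d0 (by omega)]
      simp [hl2, List.getElem_take, List.getElem_drop]
    have hc2 : G.rng (l2.getD (l2.length - 1) d0) = G.src (l2.getD 0 d0) := by
      rw [hget2 _ (by omega), hget2 _ (by omega)]
      have h1 : a' + (l2.length - 1) = b' - 1 := by omega
      have h2 : a' + 0 = a' := by omega
      rw [h1, h2]
      have := aux_pathlist_rel G d0 hp (i := b' - 1) (by omega)
      rw [show b' - 1 + 1 = b' by omega] at this
      rw [this, hsab]
    obtain ⟨w, hw1, hw2⟩ := ih l2.length (by omega) l2 rfl hl2ne hp2 hc2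
    refine ⟨w, Relation.ReflTransGen.trans ?_ hw1, hw2⟩
    have hr := aux_reaches_getD G d0 hp a' (by omega)
    have heq : l2.getD 0 d0 = l.getD a' d0 := by
      rw [hget2 0 (by omega), Nat.add_zero]
    rw [heq]
    exact hr

lemma aux_reach_bif
    (hexit : ∀ l : List E, G.IsCycle l →
      ∃ (f : E) (i : Fin l.length), G.src f = G.src (l.get i) ∧ f ≠ l.get i)
    (hnoline : ∀ v : V, ¬ G.LinePoint v) (v : V) :
    ∃ w, G.Reaches v w ∧ G.Bifurcates w := by
  have h := hnoline v
  rw [LinePoint] at h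
  push_neg at h
  obtain ⟨w, hrw, hcase⟩ := h
  rcases Classical.em (G.Bifurcates w) with hb | hb
  · exact ⟨w, hrw, hb⟩
  · have hbase : G.BaseOfClosed w := by tauto
    obtain ⟨lc, hlcne, hplc, hhead, hlast⟩ := hbase
    obtain ⟨d0⟩ : Nonempty E := ⟨lc.head hlcne⟩
    have hhead' : G.src (lc.getD 0 d0) = w := by
      rw [List.getD_eq_getElem lc d0 (List.length_pos_iff.mpr hlcne), ← List.head_eq_getElem]
      exact hhead
    have hlast' : G.rng (lc.getD (lc.length - 1) d0) = w := by
      rw [List.getD_eq_getElem lc d0 (by have := List.length_pos_iff.mpr hlcne; omega),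
        ← List.getLast_eq_getElem]
      exact hlast
    obtain ⟨w', hw'1, hw'2⟩ := aux_bif_of_closed G d0 hexit lc.length lc rfl hlcne hplc
      (by rw [hhead', hlast'])
    exact ⟨w', Relation.ReflTransGen.trans hrw (by rwa [hhead'] at hw'1), hw'2⟩

/-- Segment of an infinite path as a list. -/
def seg (p : ℕ → E) (a k : ℕ) : List E := (List.range k).map (fun t => p (a + t))

lemma seg_length (p : ℕ → E) (a k : ℕ) : (seg p a k).length = k := by simp [seg]

lemma seg_getD (p : ℕ → E) (a k : ℕ) {i : ℕ} (hi : i < k) :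
    (seg p a k).getD i d0 = p (a + i) := by
  rw [List.getD_eq_getElem _ d0 (by simp [seg_length]; omega)]
  simp [seg]

lemma seg_pathlist {p : ℕ → E} (hp : G.IsInfPath p) (a k : ℕ) :
    G.IsPathList (seg p a k) := by
  rw [IsPathList, List.Chain', List.isChain_iff_getElem]
  intro i hi
  simp only [seg_length] at hi
  simp only [seg, List.get_eq_getElem, List.getElem_map, List.getElem_range]
  rw [show a + (i+1) = (a + i) + 1 by omega]
  exact hp (a + i)

lemma seg_head {p : ℕ → E} (a k : ℕ) (hk : 0 < k) (h : seg p a k ≠ []) :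
    (seg p a k).head h = p a := by
  rw [List.head_eq_getElem, ← List.getD_eq_getElem _ (p a), seg_getD _ p a k (by omega)]
  simp

lemma seg_getLast {p : ℕ → E} (a k : ℕ) (hk : 0 < k) (h : seg p a k ≠ []) :
    (seg p a k).getLast h = p (a + (k - 1)) := by
  rw [List.getLast_eq_getElem, ← List.getD_eq_getElem _ (p a), seg_length,
    seg_getD _ p a k (by omega)]

/-- Sources along an irrational representative are pairwise distinct. -/
lemma aux_alpha_src_inj {p : ℕ → E} (hip : G.IsInfPath p)
    (hnb : ∀ j : ℕ, ¬ G.BaseOfClosed (G.src (p j))) :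
    ∀ j k, j < k → G.src (p j) ≠ G.src (p k) := by
  intro j k hjk heq
  apply hnb j
  refine ⟨seg p j (k - j), ?_, seg_pathlist G hip j (k-j), ?_, ?_⟩
  · intro h
    have := seg_length p j (k-j)
    rw [h] at this
    simp at this
    omega
  · rw [seg_head j (k-j) (by omega)]
  · rw [seg_getLast j (k-j) (by omega), hip (j + (k - j - 1)),
      show j + (k - j - 1) + 1 = k from by omega, ← heq]

/-- At a bifurcation, there is an edge avoiding all edges of `p`. -/
lemma aux_avoid_edge {p : ℕ → E} (hip : G.IsInfPath p)
    (hnb : ∀ j : ℕ, ¬ G.BaseOfClosed (G.src (p j))) {w : V} (hb : G.Bifurcates w) :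
    ∃ g : E, G.src g = w ∧ ∀ j, g ≠ p j := by
  obtain ⟨e, f, hef, hse, hsf⟩ := hb
  by_contra hcon
  push_neg at hcon
  obtain ⟨je, hje⟩ := hcon e hse
  obtain ⟨jf, hjf⟩ := hcon f hsf
  have hjj : je ≠ jf := by rintro rfl; exact hef (hje.trans hjf.symm)
  have hsrc : G.src (p je) = G.src (p jf) := by
    rw [← hje, ← hjf, hse, hsf]
  rcases lt_or_gt_of_ne hjj with h | h
  · exact aux_alpha_src_inj G hip hnb je jf h hsrc
  · exact aux_alpha_src_inj G hip hnb jf je h hsrc.symm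

/-- Extend a nonempty path to any vertex reachable from its endpoint. -/
lemma aux_extend_to_vertex {l : List E} (hne : l ≠ []) (hp : G.IsPathList l)
    {w : V} (hr : G.Reaches (G.rng (l.getLast hne)) w) :
    ∃ L, l <+: L ∧ ∃ hL : L ≠ [], G.IsPathList L ∧ l.length ≤ L.length ∧
      G.rng (L.getLast hL) = w := by
  obtain ⟨l0, hp0, hcase⟩ := aux_reaches_toList G hr
  rcases hcase with ⟨rfl, rfl⟩ | ⟨h0ne, hhead0, hlast0⟩
  · exact ⟨l, List.prefix_refl l, hne, hp, le_refl _, rfl⟩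
  · refine ⟨l ++ l0, List.prefix_append l l0, by simp [hne], ?_, by simp, ?_⟩
    · exact aux_pathlist_append G hp hp0 (fun h1 h2 => by rw [hhead0])
    · rw [List.getLast_append]
      simp [List.isEmpty_iff, h0ne, hlast0]

lemma aux_Rstep
    (hexit : ∀ l : List E, G.IsCycle l →
      ∃ (f : E) (i : Fin l.length), G.src f = G.src (l.get i) ∧ f ≠ l.get i)
    (hnoline : ∀ v : V, ¬ G.LinePoint v)
    {p : ℕ → E} (hip : G.IsInfPath p) (hnb : ∀ j : ℕ, ¬ G.BaseOfClosed (G.src (p j)))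
    {l : List E} (hne : l ≠ []) (hpl : G.IsPathList l) :
    ∃ L, l <+: L ∧ ∃ _ : L ≠ [], G.IsPathList L ∧ l.length < L.length ∧
      ∀ j, L.getD (L.length - 1) d0 ≠ p j := by
  obtain ⟨w, hr, hb⟩ := aux_reach_bif G hexit hnoline (G.rng (l.getLast hne))
  obtain ⟨g, hsg, hgav⟩ := aux_avoid_edge G hip hnb hb
  obtain ⟨L1, hpre, hL1ne, hpL1, hlen1, hend⟩ := aux_extend_to_vertex G hne hpl hr
  refine ⟨L1 ++ [g], hpre.trans (L1.prefix_append [g]), by simp, ?_, by simp; omega, ?_⟩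
  · refine aux_pathlist_append G hpL1 (List.isChain_singleton g) ?_
    intro h1 h2
    simp only [List.head_cons]
    rw [hend, hsg]
  · intro j
    have hlast : (L1 ++ [g]).getD ((L1 ++ [g]).length - 1) d0 = g := by
      rw [List.getD_eq_getElem _ d0 (by simp)]
      exact List.getElem_concat_length (by simp) _
    rw [hlast]
    exact hgav j

lemma aux_Tstep
    (hexit : ∀ l : List E, G.IsCycle l →
      ∃ (f : E) (i : Fin l.length), G.src f = G.src (l.get i) ∧ f ≠ l.get i)
    (hnoline : ∀ v : V, ¬ G.LinePoint v)
    (hinfpath : ∀ v : V, ∃ p : ℕ → E, G.IsInfPath p ∧ G.src (p 0) = v)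
    {l : List E} (hne : l ≠ []) (hpl : G.IsPathList l) (m d : ℕ) (hd : 0 < d) :
    ∃ L, l <+: L ∧ ∃ _ : L ≠ [], G.IsPathList L ∧ l.length < L.length ∧
      ∃ q, m + d ≤ q ∧ q < L.length ∧ L.getD q d0 ≠ L.getD (q - d) d0 := by
  classical
  obtain ⟨pp, hpp, hpp0⟩ := hinfpath (G.rng (l.getLast hne))
  set k := m + d + 1 with hk
  have hsegne : seg pp 0 k ≠ [] := List.ne_nil_of_length_pos (by rw [seg_length]; omega)
  have hl1ne : l ++ seg pp 0 k ≠ [] := by simp [hne]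
  have hpl1 : G.IsPathList (l ++ seg pp 0 k) := by
    refine aux_pathlist_append G hpl (seg_pathlist G hpp 0 k) ?_
    intro h1 h2
    rw [seg_head 0 k (by omega), hpp0]
  have hl1len : (l ++ seg pp 0 k).length = l.length + k := by simp [seg_length]
  obtain ⟨w, hr, hb⟩ := aux_reach_bif G hexit hnoline (G.rng ((l ++ seg pp 0 k).getLast hl1ne))
  obtain ⟨L2, hpre2, hL2ne, hpL2, hlen2, hend2⟩ := aux_extend_to_vertex G hl1ne hpl1 hr
  obtain ⟨e, f, hef, hse, hsf⟩ := hb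
  set q := L2.length with hq
  set x := L2.getD (q - d) d0 with hx
  set g := if e = x then f else e with hg
  have hsg : G.src g = w := by
    rw [hg]; split <;> assumption
  have hgx : g ≠ x := by
    rw [hg]; split
    · rename_i h; rw [← h]; exact fun hc => hef hc.symm
    · assumption
  have hqlen : l.length + k ≤ q := by
    rw [hq, ← hl1len]; exact hlen2
  refine ⟨L2 ++ [g], ((l.prefix_append (seg pp 0 k)).trans hpre2).trans (L2.prefix_append [g]),
    by simp, ?_, by simp; omega, q, by omega, by simp [hq], ?_⟩
  · refine aux_pathlist_append G hpL2 (List.isChain_singleton g) ?_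
    intro h1 h2
    simp only [List.head_cons]
    rw [hend2, hsg]
  · have h1 : (L2 ++ [g]).getD q d0 = g := by
      rw [List.getD_eq_getElem _ d0 (by simp [hq])]
      exact List.getElem_concat_length (by rw [hq]) _
    have h2 : (L2 ++ [g]).getD (q - d) d0 = x := by
      rw [hx]
      exact aux_getD_prefix d0 (L2.prefix_append [g]) (by omega)
    rw [h1, h2]
    exact hgx

lemma aux_step
    (hexit : ∀ l : List E, G.IsCycle l →
      ∃ (f : E) (i : Fin l.length), G.src f = G.src (l.get i) ∧ f ≠ l.get i)
    (hnoline : ∀ v : V, ¬ G.LinePoint v)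
    (hinfpath : ∀ v : V, ∃ p : ℕ → E, G.IsInfPath p ∧ G.src (p 0) = v)
    {p : ℕ → E} (hip : G.IsInfPath p) (hnb : ∀ j : ℕ, ¬ G.BaseOfClosed (G.src (p j)))
    {l : List E} (hne : l ≠ []) (hpl : G.IsPathList l) (m d : ℕ) (hd : 0 < d) :
    ∃ L, l <+: L ∧ ∃ _ : L ≠ [], G.IsPathList L ∧ l.length < L.length ∧
      (∃ r, l.length ≤ r ∧ r < L.length ∧ ∀ j, L.getD r d0 ≠ p j) ∧
      (∃ q, m + d ≤ q ∧ q < L.length ∧ L.getD q d0 ≠ L.getD (q - d) d0) := by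
  obtain ⟨L1, hpre1, hL1ne, hpL1, hlen1, havoid⟩ := aux_Rstep G d0 hexit hnoline hip hnb hne hpl
  obtain ⟨L, hpre2, hLne, hpL, hlen2, q, hq1, hq2, hq3⟩ :=
    aux_Tstep G d0 hexit hnoline hinfpath hL1ne hpL1 m d hd
  refine ⟨L, hpre1.trans hpre2, hLne, hpL, by omega, ⟨L1.length - 1, by omega, ?_, ?_⟩,
    ⟨q, hq1, hq2, hq3⟩⟩
  · have := hpre2.length_le; omega
  · intro j
    rw [aux_getD_prefix d0 hpre2 (by omega)]
    exact havoid j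

variable (α : ℕ → (ℕ → E))

/-- The recursively constructed increasing sequence of finite paths. -/
noncomputable def FSeq
    (hexit : ∀ l : List E, G.IsCycle l →
      ∃ (f : E) (i : Fin l.length), G.src f = G.src (l.get i) ∧ f ≠ l.get i)
    (hnoline : ∀ v : V, ¬ G.LinePoint v)
    (hinfpath : ∀ v : V, ∃ p : ℕ → E, G.IsInfPath p ∧ G.src (p 0) = v)
    (hα : ∀ i, G.IsInfPath (α i) ∧ ¬ G.IsRational (α i) ∧
      ∀ j : ℕ, ¬ G.BaseOfClosed (G.src (α i j))) :
    ℕ → {l : List E // ∃ _ : l ≠ [], G.IsPathList l}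
  | 0 => ⟨[α 0 0], by simp, List.isChain_singleton _⟩
  | n+1 =>
    let prev := FSeq hexit hnoline hinfpath hα n
    let spec := aux_step G (α 0 0) hexit hnoline hinfpath
      (hα (Nat.unpair n).1).1 (hα (Nat.unpair n).1).2.2
      prev.2.choose prev.2.choose_spec
      (Nat.unpair (Nat.unpair n).2).1 ((Nat.unpair (Nat.unpair n).2).2 + 1) (Nat.succ_pos _)
    ⟨spec.choose, spec.choose_spec.2.choose, spec.choose_spec.2.choose_spec.1⟩

lemma FSeq_succ_spec
    (hexit : ∀ l : List E, G.IsCycle l →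
      ∃ (f : E) (i : Fin l.length), G.src f = G.src (l.get i) ∧ f ≠ l.get i)
    (hnoline : ∀ v : V, ¬ G.LinePoint v)
    (hinfpath : ∀ v : V, ∃ p : ℕ → E, G.IsInfPath p ∧ G.src (p 0) = v)
    (hα : ∀ i, G.IsInfPath (α i) ∧ ¬ G.IsRational (α i) ∧
      ∀ j : ℕ, ¬ G.BaseOfClosed (G.src (α i j))) (n : ℕ) :
    (FSeq G α hexit hnoline hinfpath hα n).1 <+: (FSeq G α hexit hnoline hinfpath hα (n+1)).1 ∧
    (FSeq G α hexit hnoline hinfpath hα n).1.length <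
      (FSeq G α hexit hnoline hinfpath hα (n+1)).1.length ∧
    (∃ r, (FSeq G α hexit hnoline hinfpath hα n).1.length ≤ r ∧
      r < (FSeq G α hexit hnoline hinfpath hα (n+1)).1.length ∧
      ∀ j, (FSeq G α hexit hnoline hinfpath hα (n+1)).1.getD r (α 0 0) ≠ α (Nat.unpair n).1 j) ∧
    (∃ q, (Nat.unpair (Nat.unpair n).2).1 + ((Nat.unpair (Nat.unpair n).2).2 + 1) ≤ q ∧
      q < (FSeq G α hexit hnoline hinfpath hα (n+1)).1.length ∧
      (FSeq G α hexit hnoline hinfpath hα (n+1)).1.getD q (α 0 0) ≠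
        (FSeq G α hexit hnoline hinfpath hα (n+1)).1.getD
          (q - ((Nat.unpair (Nat.unpair n).2).2 + 1)) (α 0 0)) := by
  have h := (aux_step G (α 0 0) hexit hnoline hinfpath
      (hα (Nat.unpair n).1).1 (hα (Nat.unpair n).1).2.2
      (FSeq G α hexit hnoline hinfpath hα n).2.choose
      (FSeq G α hexit hnoline hinfpath hα n).2.choose_spec
      (Nat.unpair (Nat.unpair n).2).1 ((Nat.unpair (Nat.unpair n).2).2 + 1)
      (Nat.succ_pos _)).choose_spec
  obtain ⟨h1, hLne, h2, h3, h4, h5⟩ := h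
  exact ⟨h1, h3, h4, h5⟩

lemma FSeq_len
    (hexit : ∀ l : List E, G.IsCycle l →
      ∃ (f : E) (i : Fin l.length), G.src f = G.src (l.get i) ∧ f ≠ l.get i)
    (hnoline : ∀ v : V, ¬ G.LinePoint v)
    (hinfpath : ∀ v : V, ∃ p : ℕ → E, G.IsInfPath p ∧ G.src (p 0) = v)
    (hα : ∀ i, G.IsInfPath (α i) ∧ ¬ G.IsRational (α i) ∧
      ∀ j : ℕ, ¬ G.BaseOfClosed (G.src (α i j))) (n : ℕ) :
    n + 1 ≤ (FSeq G α hexit hnoline hinfpath hα n).1.length := by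
  induction n with
  | zero => simp [FSeq]
  | succ k ih =>
    have := (FSeq_succ_spec G α hexit hnoline hinfpath hα k).2.1
    omega

lemma FSeq_prefix
    (hexit : ∀ l : List E, G.IsCycle l →
      ∃ (f : E) (i : Fin l.length), G.src f = G.src (l.get i) ∧ f ≠ l.get i)
    (hnoline : ∀ v : V, ¬ G.LinePoint v)
    (hinfpath : ∀ v : V, ∃ p : ℕ → E, G.IsInfPath p ∧ G.src (p 0) = v)
    (hα : ∀ i, G.IsInfPath (α i) ∧ ¬ G.IsRational (α i) ∧
      ∀ j : ℕ, ¬ G.BaseOfClosed (G.src (α i j))) {n N : ℕ} (h : n ≤ N) :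
    (FSeq G α hexit hnoline hinfpath hα n).1 <+: (FSeq G α hexit hnoline hinfpath hα N).1 := by
  induction N with
  | zero => rw [Nat.le_zero.mp h]
  | succ k ih =>
    rcases Nat.lt_or_ge n (k+1) with h' | h'
    · exact (ih (by omega)).trans (FSeq_succ_spec G α hexit hnoline hinfpath hα k).1
    · rw [show n = k + 1 by omega]

end DGraph

open DGraph in
/-- Diagonalization: in a graph with no sinks where every cycle has an exit, every
vertex lies on an infinite path, and there are no line points, given a countable
complete list `α₀, α₁, …` of representatives of the tail-equivalence classes of
irrational infinite paths, none of whose vertices lies on a closed path, there is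
an irrational infinite path `β` tail-equivalent to no `αᵢ`. -/
theorem exists_irrational_path_not_tailEquiv {V E : Type*} (G : DGraph V E)
    (hnosink : ∀ v : V, ∃ e : E, G.src e = v)
    (hexit : ∀ l : List E, G.IsCycle l →
      ∃ (f : E) (i : Fin l.length), G.src f = G.src (l.get i) ∧ f ≠ l.get i)
    (hinfpath : ∀ v : V, ∃ p : ℕ → E, G.IsInfPath p ∧ G.src (p 0) = v)
    (hnoline : ∀ v : V, ¬ G.LinePoint v)
    (α : ℕ → (ℕ → E))
    (hα : ∀ i, G.IsInfPath (α i) ∧ ¬ G.IsRational (α i) ∧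
      ∀ j : ℕ, ¬ G.BaseOfClosed (G.src (α i j)))
    (hcomplete : ∀ p : ℕ → E, G.IsInfPath p → ¬ G.IsRational p →
      ∃ i, TailEquiv p (α i)) :
    ∃ β : ℕ → E, G.IsInfPath β ∧ ¬ G.IsRational β ∧
      ∀ i, ¬ TailEquiv β (α i) := by
  set F : ℕ → List E := fun n => (FSeq G α hexit hnoline hinfpath hα n).1 with hF
  have hlen : ∀ n, n + 1 ≤ (F n).length := fun n => FSeq_len G α hexit hnoline hinfpath hα n
  have hpre : ∀ {n N : ℕ}, n ≤ N → F n <+: F N :=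
    fun h => FSeq_prefix G α hexit hnoline hinfpath hα h
  have hpathF : ∀ n, G.IsPathList (F n) := fun n =>
    (FSeq G α hexit hnoline hinfpath hα n).2.choose_spec
  set β : ℕ → E := fun j => (F (j+1)).getD j (α 0 0) with hβ
  have hstable : ∀ n j, j < (F n).length → β j = (F n).getD j (α 0 0) := by
    intro n j hj
    rcases Nat.le_total (j+1) n with h | h
    · exact (aux_getD_prefix (α 0 0) (hpre h) (by have := hlen (j+1); omega)).symm
    · exact aux_getD_prefix (α 0 0) (hpre h) hj
  refine ⟨β, ?_, ?_, ?_⟩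
  · -- infinite path
    intro i
    have h1 : i + 1 < (F (i+2)).length := by have := hlen (i+2); omega
    rw [hstable (i+2) i (by omega), hstable (i+2) (i+1) h1]
    exact aux_pathlist_rel G (α 0 0) (hpathF (i+2)) h1
  · -- irrational
    rintro ⟨m, d, hd, hper⟩
    set n := Nat.pair 0 (Nat.pair m (d-1)) with hn
    have hspec := (FSeq_succ_spec G α hexit hnoline hinfpath hα n).2.2.2
    rw [hn, Nat.unpair_pair, Nat.unpair_pair] at hspec
    simp only at hspec
    obtain ⟨q, hq1, hq2, hq3⟩ := hspec
    rw [show d - 1 + 1 = d by omega] at hq1 hq3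
    have hq2' : q < (F (n+1)).length := hq2
    have hq3' : (F (n+1)).getD q (α 0 0) ≠ (F (n+1)).getD (q - d) (α 0 0) := hq3
    have e1 : β q = (F (n+1)).getD q (α 0 0) := hstable (n+1) q hq2'
    have e2 : β (q - d) = (F (n+1)).getD (q - d) (α 0 0) := hstable (n+1) (q-d) (by omega)
    have := hper (q - d - m)
    rw [show m + (q - d - m) = q - d by omega, show q - d + d = q by omega] at this
    exact hq3' (by rw [← e1, ← e2, this])
  · -- not tail equivalent to any α i
    rintro i ⟨mm, nn, hmn⟩
    set n := Nat.pair i mm with hn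
    have hspec := (FSeq_succ_spec G α hexit hnoline hinfpath hα n).2.2.1
    rw [hn, Nat.unpair_pair] at hspec
    simp only at hspec
    obtain ⟨r, hr1, hr2, hr3⟩ := hspec
    have hr1' : (F n).length ≤ r := hr1
    have hr2' : r < (F (n+1)).length := hr2
    have hr3' : ∀ j, (F (n+1)).getD r (α 0 0) ≠ α i j := hr3
    have hrm : mm ≤ r := by
      have h1 := Nat.right_le_pair i mm
      have h2 := hlen n
      omega
    have := hmn (r - mm)
    rw [show mm + (r - mm) = r by omega] at this
    have e1 : β r = (F (n+1)).getD r (α 0 0) := hstable (n+1) r hr2'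
    exact hr3' (nn + (r - mm)) (by rw [← e1, this])
end
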